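/- arXiv:2106.08303 — 6 statements merged into one kernel-verified Lean document; each statement's English description precedes it below -/
import Mathlib

section
/- If $G$ is a connected graph of order $n \ge 2$ with diameter $d$, then for every positive integer $k$, $\dim_k(G) \le n - \min\{d, k+1\}$. -/
open SimpleGraph

/-- The distance-`k` truncated distance `dₖ(x,y) = min{d(x,y), k+1}`, valued in `ℕ∞`
(so unreachable pairs have distance `⊤`, which is truncated to `k+1`). -/
noncomputable def distK {V : Type*} (G : SimpleGraph V) (k : ℕ) (x y : V) : ℕ∞ :=
  min (G.edist x y) (k + 1)

/-- `S` is a distance-`k` resolving set of `G`. -/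
def IsDistKResolving {V : Type*} (G : SimpleGraph V) (k : ℕ) (S : Set V) : Prop :=
  ∀ x y : V, x ≠ y → ∃ z ∈ S, distK G k x z ≠ distK G k y z

/-- The distance-`k` dimension of a finite graph `G`: the minimum cardinality of a
distance-`k` resolving set of `G`. -/
noncomputable def dimK {V : Type*} [Fintype V] (G : SimpleGraph V) (k : ℕ) : ℕ :=
  sInf { m | ∃ S : Finset V, IsDistKResolving G k ↑S ∧ S.card = m }

lemma dist_getVert_le {V : Type*} {G : SimpleGraph V} (hG : G.Connected) {u v : V}
    (p : G.Walk u v) (i : ℕ) :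
    G.dist u (p.getVert i) ≤ i := by
  induction p generalizing i with
  | nil => simp [Walk.getVert, SimpleGraph.dist_self]
  | @cons a b c h q ih =>
    cases i with
    | zero => simp
    | succ i =>
      have h1 : G.dist a b ≤ 1 := by
        simpa using SimpleGraph.dist_le h.toWalk
      have h2 : G.dist a ((Walk.cons h q).getVert (i + 1)) ≤
          G.dist a b + G.dist b (q.getVert i) := by
        rw [Walk.getVert_cons_succ]
        exact hG.dist_triangle
      have := ih i
      omega

lemma dist_getVert_right_le {V : Type*} {G : SimpleGraph V} {u v : V} (p : G.Walk u v) (i : ℕ) :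
    G.dist (p.getVert i) v ≤ p.length - i := by
  induction p generalizing i with
  | nil => simp [Walk.getVert, SimpleGraph.dist_self]
  | @cons a b c h q ih =>
    cases i with
    | zero =>
      simpa using SimpleGraph.dist_le (Walk.cons h q)
    | succ i =>
      have := ih i
      rw [Walk.getVert_cons_succ]
      simpa [Walk.length_cons] using this

lemma dist_getVert_eq {V : Type*} {G : SimpleGraph V} (hG : G.Connected) {u v : V}
    (p : G.Walk u v)
    (hp : p.length = G.dist u v) (i : ℕ) (hi : i ≤ p.length) :
    G.dist u (p.getVert i) = i := by
  have h1 := dist_getVert_le hG p i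
  have h2 := dist_getVert_right_le p i
  have h3 : G.dist u v ≤ G.dist u (p.getVert i) + G.dist (p.getVert i) v :=
    hG.dist_triangle
  omega

lemma edist_getVert_eq {V : Type*} {G : SimpleGraph V} (hG : G.Connected) {u v : V}
    (p : G.Walk u v)
    (hp : p.length = G.dist u v) (i : ℕ) (hi : i ≤ p.length) :
    G.edist u (p.getVert i) = i := by
  have hne : G.edist u (p.getVert i) ≠ ⊤ := by
    rw [edist_ne_top_iff_reachable]; exact hG u _
  have : G.dist u (p.getVert i) = i := dist_getVert_eq hG p hp i hi
  rw [SimpleGraph.dist] at this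
  rw [← ENat.coe_toNat hne, this]

/-- If `G` is a connected graph of order `n ≥ 2` with diameter `d`, then for every
positive integer `k`, `dimₖ(G) ≤ n - min{d, k+1}`. -/
theorem stmt0 {V : Type*} [Fintype V] (G : SimpleGraph V) (n d : ℕ)
    (hn : Fintype.card V = n) (h2 : 2 ≤ n) (hG : G.Connected) (hd : G.diam = d)
    (k : ℕ) (hk : 1 ≤ k) :
    dimK G k ≤ n - min d (k + 1) := by
  classical
  have hne : Nonempty V := by
    have : 0 < Fintype.card V := by omega
    exact Fintype.card_pos_iff.mp this
  obtain ⟨u, v, huv⟩ := SimpleGraph.exists_dist_eq_diam (G := G)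
  rw [hd] at huv
  obtain ⟨p, hp⟩ := (hG u v).exists_walk_length_eq_dist
  set t := min d (k + 1) with ht
  have htlen : t ≤ p.length := by
    rw [hp, huv]; omega
  have hpd : p.length = G.dist u v := hp
  -- the removed vertices
  set A : Finset V := Finset.image (fun i : Fin t => p.getVert (i + 1)) Finset.univ with hA
  have hinj : ∀ i j : Fin t, p.getVert (i + 1) = p.getVert (j + 1) → i = j := by
    intro i j hij
    have h1 : G.dist u (p.getVert (i + 1)) = i + 1 :=
      dist_getVert_eq hG p hpd (i + 1) (by omega)
    have h2 : G.dist u (p.getVert (j + 1)) = j + 1 :=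
      dist_getVert_eq hG p hpd (j + 1) (by omega)
    rw [hij, h2] at h1
    exact Fin.ext (by omega)
  have hcardA : A.card = t := by
    rw [hA, Finset.card_image_of_injective _ (fun i j h => hinj i j h), Finset.card_univ,
      Fintype.card_fin]
  have hedist : ∀ i : Fin t, G.edist u (p.getVert (i + 1)) = (i : ℕ) + 1 := by
    intro i
    have := edist_getVert_eq hG p hpd (i + 1) (by omega)
    simpa using this
  have huA : u ∉ A := by
    rw [hA]
    simp only [Finset.mem_image, Finset.mem_univ, true_and, not_exists]
    intro i hi
    have h1 : G.dist u (p.getVert (i + 1)) = i + 1 :=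
      dist_getVert_eq hG p hpd (i + 1) (by omega)
    rw [hi, SimpleGraph.dist_self] at h1
    omega
  -- the resolving set
  set S : Finset V := Aᶜ with hS
  have hres : IsDistKResolving G k ↑S := by
    intro x y hxy
    have hzero : ∀ w z : V, w ≠ z → distK G k w z ≠ 0 := by
      intro w z hwz
      have h1 : 0 < G.edist w z := G.edist_pos_of_ne hwz
      have h2 : (0 : ℕ∞) < (k : ℕ∞) + 1 := by
        exact_mod_cast Nat.succ_pos k
      exact (lt_min h1 h2).ne'
    by_cases hx : x ∈ S
    · refine ⟨x, by simpa using hx, ?_⟩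
      have : distK G k x x = 0 := by simp [distK]
      rw [this]
      exact fun h => hzero y x (Ne.symm hxy) h.symm
    by_cases hy : y ∈ S
    · refine ⟨y, by simpa using hy, ?_⟩
      have : distK G k y y = 0 := by simp [distK]
      rw [this]
      exact fun h => hzero x y hxy h
    -- both x and y are in A
    have hxA : x ∈ A := by simpa [hS] using hx
    have hyA : y ∈ A := by simpa [hS] using hy
    obtain ⟨i, -, hix⟩ := Finset.mem_image.mp hxA
    obtain ⟨j, -, hjy⟩ := Finset.mem_image.mp hyA
    refine ⟨u, by simpa [hS] using huA, ?_⟩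
    have hxu : distK G k x u = (i : ℕ) + 1 := by
      rw [distK, SimpleGraph.edist_comm, ← hix, hedist i]
      have : ((i : ℕ) : ℕ∞) + 1 ≤ (k : ℕ∞) + 1 := by
        have : (i : ℕ) + 1 ≤ k + 1 := by
          have := i.isLt; omega
        exact_mod_cast this
      exact min_eq_left this
    have hyu : distK G k y u = (j : ℕ) + 1 := by
      rw [distK, SimpleGraph.edist_comm, ← hjy, hedist j]
      have : ((j : ℕ) : ℕ∞) + 1 ≤ (k : ℕ∞) + 1 := by
        have : (j : ℕ) + 1 ≤ k + 1 := by
          have := j.isLt; omega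
        exact_mod_cast this
      exact min_eq_left this
    rw [hxu, hyu]
    intro hij
    have hnat : (i : ℕ) + 1 = (j : ℕ) + 1 := by exact_mod_cast hij
    have hij' : i = j := Fin.ext (by omega)
    exact hxy (by rw [← hix, ← hjy, hij'])
  have hcardS : S.card = n - t := by
    rw [hS, Finset.card_compl, hcardA, hn]
  calc dimK G k ≤ S.card := Nat.sInf_le ⟨S, hres, rfl⟩
    _ = n - t := hcardS
end

section
/- For all positive integers $j$ and $k$: (i) every finite simple graph $G$ with $\dim_j(G) = k$ has at most $(\lfloor \tfrac{2(j+1)}{3}\rfloor +1)^{k}+k \sum_{i = 1}^{\lceil (j+1)/3\rceil } (2i-1)^{k-1}$ vertices; and (ii) there exists a finite simple graph $G$ with $\dim_j(G) = k$ and exactly $(\lfloor \tfrac{2(j+1)}{3}\rfloor +1)^{k}+k \sum_{i = 1}^{\lceil (j+1)/3\rceil } (2i-1)^{k-1}$ vertices. -/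
open SimpleGraph

/-!
A distance-`j` resolving set `S` with `|S| = k` codes every vertex injectively by its vector of
truncated distances to `S`, a point of `{0, …, j + 1}^S`. Put `c = ⌈(j + 1)/3⌉`. If all coordinates
are at least `c`, the code lies in a box of `(j + 2 - c)^k` points. Otherwise some coordinate
`t = d(x, s) < c` is an honest distance, and the triangle inequality confines every other coordinate
to an interval of length `2t` around the code of `s` itself, which leaves `(2t + 1)^(k - 1)` codes
for each `s` and `t`.

For sharpness, take as vertices all vectors of `ℕ^k` that can occur as such codes with respect to
the `k` landmarks `D • (1 - eᵢ)`, adjacent when they differ by at most one in every coordinate.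
This set is closed under a step of the king's move toward any of its points, so graph distance is
the sup-distance and the distance to the `i`-th landmark is the `i`-th coordinate: the landmarks
resolve. As the bound is strictly increasing in `k`, no smaller set resolves.
-/

open Finset

namespace SimpleGraph

variable {V W : Type*} {G : SimpleGraph V} {G' : SimpleGraph W}

lemma Hom.edist_le (f : G →g G') (u v : V) : G'.edist (f u) (f v) ≤ G.edist u v := by
  by_cases h : G.Reachable u v
  · obtain ⟨p, hp⟩ := h.exists_walk_length_eq_edist
    rw [← hp, ← p.length_map f]
    exact SimpleGraph.edist_le _
  · rw [edist_eq_top_of_not_reachable h]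
    exact le_top

lemma Iso.edist_eq (e : G ≃g G') (u v : V) : G'.edist (e u) (e v) = G.edist u v :=
  le_antisymm (e.toHom.edist_le u v) (by simpa using e.symm.toHom.edist_le (e u) (e v))

end SimpleGraph

section DistK

variable {V W : Type*} (G : SimpleGraph V) (j : ℕ)

lemma distK_le (x y : V) : distK G j x y ≤ j + 1 := min_le_right _ _

lemma distK_ne_top (x y : V) : distK G j x y ≠ ⊤ :=
  ne_top_of_le_ne_top (by simp) (distK_le G j x y)

lemma distK_eq_zero_iff {x y : V} : distK G j x y = 0 ↔ x = y := by
  simp [distK, edist_eq_zero_iff]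

lemma distK_le_edist_add (x y z : V) : distK G j x z ≤ G.edist x y + distK G j y z :=
  calc min (G.edist x z) (j + 1)
      ≤ min (G.edist x y + G.edist y z) (G.edist x y + (j + 1)) :=
        min_le_min G.edist_triangle le_add_self
    _ = G.edist x y + distK G j y z := min_add_add_left _ _ _

lemma edist_eq_distK_of_lt {x y : V} (h : distK G j x y < j + 1) :
    G.edist x y = distK G j x y :=
  (min_eq_left ((min_lt_iff.mp h).resolve_right (lt_irrefl _)).le).symm

lemma isDistKResolving_univ : IsDistKResolving G j Set.univ := fun x y hxy =>
  ⟨y, Set.mem_univ y, by rwa [(distK_eq_zero_iff G j).mpr rfl, Ne, distK_eq_zero_iff]⟩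

variable {G j} {G' : SimpleGraph W}

lemma SimpleGraph.Iso.distK_eq (e : G ≃g G') (x y : V) :
    distK G' j (e x) (e y) = distK G j x y := by
  rw [distK, distK, e.edist_eq]

lemma IsDistKResolving.image_iso {S : Set V} (hS : IsDistKResolving G j S) (e : G ≃g G') :
    IsDistKResolving G' j (e '' S) := by
  intro x y hxy
  obtain ⟨z, hz, hd⟩ := hS (e.symm x) (e.symm y) (by simpa using hxy)
  refine ⟨e z, Set.mem_image_of_mem e hz, ?_⟩
  rwa [← e.apply_symm_apply x, ← e.apply_symm_apply y, e.distK_eq, e.distK_eq]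

variable [Fintype V] [Fintype W]

lemma dimK_le_card {S : Finset V} (hS : IsDistKResolving G j S) : dimK G j ≤ #S :=
  Nat.sInf_le ⟨S, hS, rfl⟩

variable (G j) in
lemma exists_isDistKResolving_card_eq_dimK :
    ∃ S : Finset V, IsDistKResolving G j S ∧ #S = dimK G j :=
  Nat.sInf_mem (s := {m | ∃ S : Finset V, IsDistKResolving G j S ∧ #S = m})
    ⟨_, univ, by simpa using isDistKResolving_univ G j, rfl⟩

lemma SimpleGraph.Iso.dimK_le (e : G ≃g G') : dimK G' j ≤ dimK G j := by
  obtain ⟨S, hS, hcard⟩ := exists_isDistKResolving_card_eq_dimK G j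
  rw [← hcard, ← card_map (e : V ≃ W).toEmbedding]
  exact dimK_le_card (by simpa using hS.image_iso e)

lemma SimpleGraph.Iso.dimK_eq (e : G ≃g G') : dimK G' j = dimK G j :=
  le_antisymm e.dimK_le e.symm.dimK_le

end DistK

section CodeSpace

variable {ι : Type*} [Fintype ι] [DecidableEq ι]

def nearBox (w : ι → ℕ) (i : ι) (t : ℕ) : Finset (ι → ℕ) :=
  Fintype.piFinset fun l => if l = i then {t} else Icc (w l - t) (w l + t)

def codeSpace (c M : ℕ) (w : ι → ι → ℕ) : Finset (ι → ℕ) :=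
  Fintype.piFinset (fun _ => Icc c M) ∪ (univ ×ˢ range c).biUnion fun p => nearBox (w p.1) p.1 p.2

lemma mem_nearBox {w v : ι → ℕ} {i : ι} {t : ℕ} :
    v ∈ nearBox w i t ↔ v i = t ∧ ∀ l ≠ i, w l - t ≤ v l ∧ v l ≤ w l + t := by
  simp only [nearBox, Fintype.mem_piFinset]
  constructor
  · intro h
    refine ⟨by simpa using h i, fun l hl => ?_⟩
    simpa [hl] using h l
  · rintro ⟨hi, hl⟩ l
    split_ifs with h
    · simp [h, hi]
    · exact mem_Icc.mpr (hl l h)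

lemma mem_codeSpace {c M : ℕ} {w : ι → ι → ℕ} {v : ι → ℕ} :
    v ∈ codeSpace c M w ↔ (∀ l, c ≤ v l ∧ v l ≤ M) ∨
      ∃ i, v i < c ∧ ∀ l ≠ i, w i l - v i ≤ v l ∧ v l ≤ w i l + v i := by
  simp only [codeSpace, mem_union, Fintype.mem_piFinset, mem_Icc, mem_biUnion, mem_product,
    mem_univ, true_and, mem_range, mem_nearBox, Prod.exists]
  constructor
  · rintro (h | ⟨i, t, ht, rfl, h⟩)
    exacts [.inl h, .inr ⟨i, ht, h⟩]
  · rintro (h | ⟨i, ht, h⟩)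
    exacts [.inl h, .inr ⟨i, v i, ht, rfl, h⟩]

lemma card_nearBox (w : ι → ℕ) (i : ι) (t : ℕ) :
    #(nearBox w i t) = ∏ l ∈ univ.erase i, (w l + t + 1 - (w l - t)) := by
  rw [nearBox, Fintype.card_piFinset, ← mul_prod_erase univ _ (mem_univ i), if_pos rfl,
    card_singleton, one_mul]
  refine prod_congr rfl fun l hl => ?_
  rw [if_neg (ne_of_mem_erase hl), Nat.card_Icc]

lemma card_nearBox_le (w : ι → ℕ) (i : ι) (t : ℕ) :
    #(nearBox w i t) ≤ (2 * t + 1) ^ (Fintype.card ι - 1) := by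
  rw [card_nearBox, ← card_univ, ← card_erase_of_mem (mem_univ i), ← prod_const]
  exact prod_le_prod' fun l _ => by omega

lemma card_nearBox_of_le {w : ι → ℕ} {i : ι} {t : ℕ} (h : ∀ l ≠ i, t ≤ w l) :
    #(nearBox w i t) = (2 * t + 1) ^ (Fintype.card ι - 1) := by
  rw [card_nearBox, ← card_univ, ← card_erase_of_mem (mem_univ i), ← prod_const]
  exact prod_congr rfl fun l hl => by have := h l (ne_of_mem_erase hl); omega

lemma card_farBox (c M : ℕ) :
    #(Fintype.piFinset fun _ : ι => Icc c M) = (M + 1 - c) ^ Fintype.card ι := by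
  simp

lemma sum_card_nearBox_le (c : ℕ) (w : ι → ι → ℕ) :
    ∑ p ∈ univ ×ˢ range c, #(nearBox (w p.1) p.1 p.2)
      ≤ Fintype.card ι * ∑ t ∈ range c, (2 * t + 1) ^ (Fintype.card ι - 1) := by
  rw [sum_product, ← smul_eq_mul, ← card_univ, ← sum_const]
  exact sum_le_sum fun i _ => sum_le_sum fun t _ => card_nearBox_le _ _ _

lemma card_codeSpace_le (c M : ℕ) (w : ι → ι → ℕ) :
    #(codeSpace c M w) ≤ (M + 1 - c) ^ Fintype.card ι
      + Fintype.card ι * ∑ t ∈ range c, (2 * t + 1) ^ (Fintype.card ι - 1) := by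
  calc #(codeSpace c M w)
      ≤ #(Fintype.piFinset fun _ : ι => Icc c M)
        + ∑ p ∈ univ ×ˢ range c, #(nearBox (w p.1) p.1 p.2) :=
        (card_union_le _ _).trans (Nat.add_le_add_left card_biUnion_le _)
    _ ≤ _ := by rw [card_farBox]; exact Nat.add_le_add_left (sum_card_nearBox_le c w) _

/-- Once the centres `w i` are this far apart, the boxes of `codeSpace` are pairwise disjoint
and have full size. -/
lemma card_codeSpace {c M : ℕ} {w : ι → ι → ℕ} (hw : ∀ i l, l ≠ i → 2 * c - 1 ≤ w i l) :
    #(codeSpace c M w) = (M + 1 - c) ^ Fintype.card ι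
      + Fintype.card ι * ∑ t ∈ range c, (2 * t + 1) ^ (Fintype.card ι - 1) := by
  have hfull : ∀ p ∈ univ ×ˢ range c, #(nearBox (w p.1) p.1 p.2)
      = (2 * p.2 + 1) ^ (Fintype.card ι - 1) := by
    rintro ⟨i, t⟩ hp
    have ht : t < c := by simpa using hp
    dsimp only
    exact card_nearBox_of_le fun l hl => by have := hw i l hl; omega
  have hdisj : ((univ ×ˢ range c : Finset (ι × ℕ)) : Set (ι × ℕ)).PairwiseDisjoint
      fun p => nearBox (w p.1) p.1 p.2 := by
    rintro ⟨i, t⟩ hp ⟨i', t'⟩ hp' hne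
    simp only [coe_product, coe_univ, coe_range, Set.mem_prod, Set.mem_univ, Set.mem_Iio,
      true_and] at hp hp'
    refine disjoint_left.mpr fun v hv hv' => ?_
    rw [mem_nearBox] at hv hv'
    dsimp only at hv hv'
    by_cases hii : i = i'
    · subst hii
      exact hne (by rw [← hv.1, ← hv'.1])
    · have := (hv'.2 i hii).1
      have := hw i' i hii
      omega
  have hfar : Disjoint (Fintype.piFinset fun _ : ι => Icc c M)
      ((univ ×ˢ range c).biUnion fun p => nearBox (w p.1) p.1 p.2) := by
    refine disjoint_left.mpr fun v hv hv' => ?_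
    obtain ⟨⟨i, t⟩, hp, hv'⟩ := mem_biUnion.mp hv'
    have := (mem_Icc.mp (Fintype.mem_piFinset.mp hv i)).1
    have : v i = t := (mem_nearBox.mp hv').1
    simp only [mem_product, mem_range] at hp
    omega
  rw [codeSpace, card_union_of_disjoint hfar, card_biUnion hdisj, card_farBox, sum_congr rfl hfull,
    sum_product, ← smul_eq_mul, ← card_univ, ← sum_const]

end CodeSpace

def maxOrder (j k : ℕ) : ℕ :=
  ((2 * (j + 1)) / 3 + 1) ^ k + k * ∑ i ∈ Finset.Icc 1 ((j + 3) / 3), (2 * i - 1) ^ (k - 1)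

lemma maxOrder_eq (j k : ℕ) : maxOrder j k
    = (j + 1 + 1 - (j + 3) / 3) ^ k + k * ∑ t ∈ range ((j + 3) / 3), (2 * t + 1) ^ (k - 1) := by
  rw [maxOrder, ← Ico_add_one_right_eq_Icc, sum_Ico_eq_sum_range]
  congr 3
  · omega
  · funext t
    congr 1
    omega

lemma maxOrder_strictMono (j : ℕ) : StrictMono (maxOrder j) := by
  intro a b hab
  simp only [maxOrder_eq]
  have hsum : ∑ t ∈ range ((j + 3) / 3), (2 * t + 1) ^ (a - 1)
      ≤ ∑ t ∈ range ((j + 3) / 3), (2 * t + 1) ^ (b - 1) :=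
    sum_le_sum fun t _ => Nat.pow_le_pow_right (Nat.succ_pos _) (by omega)
  have hpos : 1 ≤ ∑ t ∈ range ((j + 3) / 3), (2 * t + 1) ^ (b - 1) :=
    calc 1 = (2 * 0 + 1) ^ (b - 1) := by simp
      _ ≤ _ := single_le_sum (f := fun t => (2 * t + 1) ^ (b - 1)) (fun _ _ => Nat.zero_le _)
          (mem_range.mpr (show 0 < (j + 3) / 3 by omega))
  refine add_lt_add_of_le_of_lt (Nat.pow_le_pow_right (by omega) hab.le) ?_
  calc _ ≤ a * ∑ t ∈ range ((j + 3) / 3), (2 * t + 1) ^ (b - 1) := Nat.mul_le_mul_left _ hsum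
    _ < _ := Nat.mul_lt_mul_of_pos_right hab hpos

section UpperBound

variable {V : Type*} (G : SimpleGraph V) (j : ℕ) (S : Finset V)

noncomputable def truncCode (x : V) : S → ℕ := fun s => (distK G j x s).toNat

lemma natCast_truncCode (x : V) (s : S) : (truncCode G j S x s : ℕ∞) = distK G j x s :=
  ENat.natCast_toNat (distK_ne_top G j x s)

lemma truncCode_le (x : V) (s : S) : truncCode G j S x s ≤ j + 1 := by
  have h := distK_le G j x s
  rw [← natCast_truncCode] at h
  exact_mod_cast h

variable {G j S}

lemma truncCode_injective (hS : IsDistKResolving G j S) : Function.Injective (truncCode G j S) := by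
  intro x y hxy
  by_contra hne
  obtain ⟨z, hz, hd⟩ := hS x y hne
  apply hd
  rw [← natCast_truncCode G j S x ⟨z, hz⟩, ← natCast_truncCode G j S y ⟨z, hz⟩, hxy]

lemma truncCode_mem_nearBox [DecidableEq V] {x : V} {s : S} (h : truncCode G j S x s < j + 1) :
    truncCode G j S x ∈ nearBox (truncCode G j S s) s (truncCode G j S x s) := by
  have hxs : G.edist x s = truncCode G j S x s := by
    rw [natCast_truncCode]
    apply edist_eq_distK_of_lt
    rw [← natCast_truncCode]
    exact_mod_cast h
  refine mem_nearBox.mpr ⟨rfl, fun l _ => ?_⟩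
  have hx := distK_le_edist_add G j x s l
  have hs := distK_le_edist_add G j s x l
  rw [hxs, ← natCast_truncCode, ← natCast_truncCode] at hx
  rw [edist_comm, hxs, ← natCast_truncCode, ← natCast_truncCode] at hs
  norm_cast at hx hs
  omega

lemma truncCode_mem_codeSpace [DecidableEq V] {c : ℕ} (hc : c ≤ j + 1) (x : V) :
    truncCode G j S x ∈ codeSpace c (j + 1) fun s => truncCode G j S s := by
  rw [mem_codeSpace]
  by_cases hfar : ∀ s, c ≤ truncCode G j S x s
  · exact .inl fun s => ⟨hfar s, truncCode_le G j S x s⟩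
  · push Not at hfar
    obtain ⟨s, hs⟩ := hfar
    exact .inr ⟨s, hs, (mem_nearBox.mp (truncCode_mem_nearBox (by omega))).2⟩

theorem card_le_maxOrder_of_isDistKResolving [Fintype V] (hS : IsDistKResolving G j S) :
    Fintype.card V ≤ maxOrder j #S := by
  classical
  calc Fintype.card V ≤ #(codeSpace ((j + 3) / 3) (j + 1) fun s => truncCode G j S s) := by
        rw [← card_univ]
        exact card_le_card_of_injOn _ (fun x _ => truncCode_mem_codeSpace (by omega) x)
          (truncCode_injective hS).injOn
    _ ≤ _ := card_codeSpace_le _ _ _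
    _ = maxOrder j #S := by rw [maxOrder_eq, Fintype.card_coe]

end UpperBound

theorem card_le_maxOrder_dimK {V : Type*} [Fintype V] (G : SimpleGraph V) (j : ℕ) :
    Fintype.card V ≤ maxOrder j (dimK G j) := by
  obtain ⟨S, hS, hcard⟩ := exists_isDistKResolving_card_eq_dimK G j
  exact hcard ▸ card_le_maxOrder_of_isDistKResolving hS

section KingGraph

def kingGraph (ι : Type*) : SimpleGraph (ι → ℕ) where
  Adj u v := u ≠ v ∧ ∀ i, Nat.dist (u i) (v i) ≤ 1
  symm := ⟨fun u v h => ⟨h.1.symm, fun i => Nat.dist_comm (u i) (v i) ▸ h.2 i⟩⟩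
  loopless := ⟨fun _ h => h.1 rfl⟩

variable {ι : Type*}

def stepToward (u v : ι → ℕ) : ι → ℕ := fun i =>
  if u i < v i then u i + 1 else if v i < u i then u i - 1 else u i

lemma kingGraph_adj_stepToward {u v : ι → ℕ} (h : u ≠ v) :
    (kingGraph ι).Adj u (stepToward u v) := by
  obtain ⟨i, hi⟩ := Function.ne_iff.mp h
  refine ⟨fun he => ?_, fun l => ?_⟩
  · have := congrFun he i
    simp only [stepToward] at this
    split_ifs at this <;> omega
  · simp only [stepToward, Nat.dist]
    split_ifs <;> omega

variable [Fintype ι]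

def supDist (u v : ι → ℕ) : ℕ := univ.sup fun i => Nat.dist (u i) (v i)

lemma supDist_le_iff {u v : ι → ℕ} {n : ℕ} : supDist u v ≤ n ↔ ∀ i, Nat.dist (u i) (v i) ≤ n := by
  simp [supDist]

lemma dist_le_supDist (u v : ι → ℕ) (i : ι) : Nat.dist (u i) (v i) ≤ supDist u v :=
  supDist_le_iff.mp le_rfl i

@[simp]
lemma supDist_self (u : ι → ℕ) : supDist u u = 0 :=
  Nat.le_zero.mp (supDist_le_iff.mpr fun i => by simp [Nat.dist_self])

lemma eq_of_supDist_eq_zero {u v : ι → ℕ} (h : supDist u v = 0) : u = v :=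
  funext fun i => Nat.eq_of_dist_eq_zero (Nat.le_zero.mp (h ▸ dist_le_supDist u v i))

lemma supDist_triangle (u v w : ι → ℕ) : supDist u w ≤ supDist u v + supDist v w :=
  supDist_le_iff.mpr fun i => (Nat.dist.triangle_inequality _ (v i) _).trans
    (Nat.add_le_add (dist_le_supDist u v i) (dist_le_supDist v w i))

lemma supDist_le_length {u v : ι → ℕ} (p : (kingGraph ι).Walk u v) : supDist u v ≤ p.length := by
  induction p with
  | nil => simp
  | @cons u w v h q ih =>
    calc supDist u v ≤ supDist u w + supDist w v := supDist_triangle u w v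
      _ ≤ 1 + q.length := Nat.add_le_add (supDist_le_iff.mpr h.2) ih
      _ = (q.cons h).length := by rw [Walk.length_cons, add_comm]

lemma supDist_le_edist_kingGraph (u v : ι → ℕ) : (supDist u v : ℕ∞) ≤ (kingGraph ι).edist u v := by
  rw [edist_eq_sInf]
  exact le_sInf (Set.forall_mem_range.mpr fun p => by exact_mod_cast supDist_le_length p)

lemma supDist_stepToward {u v : ι → ℕ} (h : u ≠ v) :
    supDist (stepToward u v) v + 1 = supDist u v := by
  obtain ⟨i, hi⟩ := Function.ne_iff.mp h
  have hpos := dist_le_supDist u v i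
  have hle : supDist (stepToward u v) v ≤ supDist u v - 1 := supDist_le_iff.mpr fun l => by
    have := dist_le_supDist u v l
    simp only [stepToward, Nat.dist] at *
    split_ifs <;> omega
  have hge : supDist u v ≤ supDist (stepToward u v) v + 1 := supDist_le_iff.mpr fun l => by
    have := dist_le_supDist (stepToward u v) v l
    simp only [stepToward, Nat.dist] at *
    split_ifs at * <;> omega
  simp only [Nat.dist] at hpos
  omega

variable {T : Set (ι → ℕ)} (hT : ∀ u ∈ T, ∀ v ∈ T, stepToward u v ∈ T)
include hT

lemma exists_walk_induce_kingGraph (n : ℕ) :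
    ∀ u v : T, supDist u.1 v.1 = n → ∃ p : ((kingGraph ι).induce T).Walk u v, p.length = n := by
  induction n with
  | zero =>
    intro u v h
    obtain rfl : u = v := Subtype.ext (eq_of_supDist_eq_zero h)
    exact ⟨.nil, rfl⟩
  | succ n ih =>
    intro u v h
    have hne : u.1 ≠ v.1 := fun he => by simp [he] at h
    obtain ⟨p, hp⟩ := ih ⟨_, hT u.1 u.2 v.1 v.2⟩ v (by
      show supDist (stepToward u.1 v.1) v.1 = n
      have := supDist_stepToward hne
      omega)
    exact ⟨.cons (induce_adj.mpr (kingGraph_adj_stepToward hne)) p, by simp [hp]⟩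

theorem edist_induce_kingGraph (u v : T) :
    ((kingGraph ι).induce T).edist u v = supDist u.1 v.1 := by
  refine le_antisymm ?_ ?_
  · obtain ⟨p, hp⟩ := exists_walk_induce_kingGraph hT _ u v rfl
    exact hp ▸ edist_le p
  · exact (supDist_le_edist_kingGraph u.1 v.1).trans
      ((Embedding.induce T).toHom.edist_le u v)

end KingGraph

namespace Extremal

variable (j : ℕ) {ι : Type*}

/-- `⌈(j + 1)/3⌉` -/
def radius : ℕ := (j + 3) / 3

/-- The distance between two landmarks: `2 * radius j - 1 ≤ spacing j` keeps the near boxes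
disjoint, and `j + 1 - radius j ≤ spacing j ≤ 2 * radius j` makes every vector of the far box a
code. -/
def spacing : ℕ := max (2 * radius j - 1) (j + 1 - radius j)

lemma spacing_bounds : 1 ≤ radius j ∧ 2 * radius j - 1 ≤ spacing j ∧ spacing j ≤ 2 * radius j ∧
    j + 1 - radius j ≤ spacing j ∧ spacing j + radius j ≤ j + 2 := by
  simp only [spacing, radius]
  omega

/-- The second clause says that `v i` is the sup-distance from `v` to `landmark j i`. -/
def IsCode (v : ι → ℕ) : Prop :=
  (∀ l, v l ≤ j + 1) ∧ ∀ i l, l ≠ i → spacing j ≤ v l + v i ∧ v l ≤ spacing j + v i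

variable {j} in
lemma IsCode.stepToward {u v : ι → ℕ} (hu : IsCode j u) (hv : IsCode j v) :
    IsCode j (stepToward u v) := by
  refine ⟨fun l => ?_, fun a b hab => ?_⟩
  · have := hu.1 l
    have := hv.1 l
    simp only [_root_.stepToward]
    split_ifs <;> omega
  · have := hu.2 a b hab
    have := hv.2 a b hab
    have := hu.2 b a hab.symm
    have := hv.2 b a hab.symm
    simp only [_root_.stepToward]
    split_ifs <;> omega

variable [DecidableEq ι]

def landmark (i : ι) : ι → ℕ := Function.update (fun _ => spacing j) i 0

variable {j}

lemma landmark_apply (i l : ι) : landmark j i l = if l = i then 0 else spacing j :=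
  Function.update_apply _ _ _ _

lemma landmark_injective : Function.Injective (landmark j : ι → ι → ℕ) := by
  intro a b hab
  by_contra hne
  have := congrFun hab a
  simp only [landmark_apply, if_neg hne, if_true] at this
  obtain ⟨h1, h2, -⟩ := spacing_bounds j
  omega

lemma isCode_landmark (i : ι) : IsCode j (landmark j i) := by
  obtain ⟨h1, h2, h3, h4, h5⟩ := spacing_bounds j
  refine ⟨fun l => ?_, fun a b hab => ?_⟩
  · simp only [landmark_apply]
    split_ifs <;> omega
  · simp only [landmark_apply]
    split_ifs with hb ha <;> first | omega | exact absurd (hb.trans ha.symm) hab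

lemma supDist_landmark [Fintype ι] {v : ι → ℕ} (hv : IsCode j v) (i : ι) :
    supDist v (landmark j i) = v i := by
  refine le_antisymm (supDist_le_iff.mpr fun l => ?_) ?_
  · simp only [landmark_apply, Nat.dist]
    split_ifs with hl
    · subst hl; omega
    · have := hv.2 i l hl; omega
  · simpa [landmark_apply, Nat.dist] using dist_le_supDist v (landmark j i) i

variable (j ι) [Fintype ι]

def codes : Finset (ι → ℕ) := codeSpace (radius j) (j + 1) (landmark j)

variable {j ι}

lemma mem_codes {v : ι → ℕ} : v ∈ codes j ι ↔ IsCode j v := by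
  obtain ⟨h1, h2, h3, h4, h5⟩ := spacing_bounds j
  rw [codes, mem_codeSpace]
  constructor
  · rintro (hfar | ⟨i, hi, hnear⟩)
    · exact ⟨fun l => (hfar l).2, fun a b _ => by have := hfar a; have := hfar b; omega⟩
    · have hnear' : ∀ l ≠ i, spacing j - v i ≤ v l ∧ v l ≤ spacing j + v i := fun l hl => by
        simpa [landmark_apply, hl] using hnear l hl
      refine ⟨fun l => ?_, fun a b hab => ?_⟩
      · by_cases hl : l = i
        · subst hl; omega
        · have := hnear' l hl; omega
      · by_cases ha : a = i
        · subst ha; have := hnear' b hab; omega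
        · by_cases hb : b = i
          · subst hb; have := hnear' a ha; omega
          · have := hnear' a ha; have := hnear' b hb; omega
  · rintro ⟨hle, hpair⟩
    by_cases hfar : ∀ l, radius j ≤ v l
    · exact .inl fun l => ⟨hfar l, hle l⟩
    · push Not at hfar
      obtain ⟨i, hi⟩ := hfar
      refine .inr ⟨i, hi, fun l hl => ?_⟩
      have := hpair i l hl
      simp only [landmark_apply, if_neg hl]
      omega

variable (j ι)

def graph : SimpleGraph (codes j ι) := (kingGraph ι).induce (codes j ι : Set (ι → ℕ))

variable {j ι}

lemma stepToward_mem_codes {u v : ι → ℕ} (hu : u ∈ codes j ι) (hv : v ∈ codes j ι) :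
    stepToward u v ∈ codes j ι :=
  mem_codes.mpr ((mem_codes.mp hu).stepToward (mem_codes.mp hv))

lemma landmark_mem_codes (i : ι) : landmark j i ∈ codes j ι :=
  mem_codes.mpr (isCode_landmark i)

variable (j ι)

lemma card_codes : #(codes j ι) = maxOrder j (Fintype.card ι) := by
  obtain ⟨-, h2, -⟩ := spacing_bounds j
  rw [codes, card_codeSpace fun i l hl => by simpa [landmark_apply, hl] using h2, maxOrder_eq]
  rfl

def landmarkEmb : ι ↪ codes j ι :=
  ⟨fun i => ⟨landmark j i, landmark_mem_codes i⟩,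
    fun _ _ h => landmark_injective (congrArg Subtype.val h)⟩

variable {j ι}

@[simp]
lemma coe_landmarkEmb (i : ι) : (landmarkEmb j ι i : ι → ℕ) = landmark j i := rfl

lemma distK_graph_landmarkEmb (v : codes j ι) (i : ι) :
    distK (graph j ι) j v (landmarkEmb j ι i) = v.1 i := by
  rw [distK, graph, edist_induce_kingGraph (fun u hu v hv => stepToward_mem_codes hu hv)]
  rw [coe_landmarkEmb, supDist_landmark (mem_codes.mp v.2)]
  exact min_eq_left (by exact_mod_cast (mem_codes.mp v.2).1 i)

lemma isDistKResolving_landmarks :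
    IsDistKResolving (graph j ι) j (univ.map (landmarkEmb j ι) : Finset (codes j ι)) := by
  intro x y hxy
  obtain ⟨i, hi⟩ := Function.ne_iff.mp (Subtype.coe_ne_coe.mpr hxy)
  refine ⟨landmarkEmb j ι i, by simp, ?_⟩
  rw [distK_graph_landmarkEmb, distK_graph_landmarkEmb]
  exact_mod_cast hi

variable (j ι)

theorem dimK_graph : dimK (graph j ι) j = Fintype.card ι := by
  refine le_antisymm ?_ (not_lt.mp fun hlt => ?_)
  · simpa using dimK_le_card isDistKResolving_landmarks
  · have := card_le_maxOrder_dimK (graph j ι) j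
    rw [Fintype.card_coe, card_codes] at this
    exact absurd this (not_le.mpr (maxOrder_strictMono j hlt))

end Extremal

theorem stmt1_general (j k : ℕ) :
    (∀ (V : Type) [Fintype V] (G : SimpleGraph V),
      dimK G j = k →
      Fintype.card V ≤
        ((2 * (j + 1)) / 3 + 1) ^ k
          + k * ∑ i ∈ Finset.Icc 1 ((j + 3) / 3), (2 * i - 1) ^ (k - 1)) ∧
    (∃ (m : ℕ) (G : SimpleGraph (Fin m)),
      dimK G j = k ∧
      m = ((2 * (j + 1)) / 3 + 1) ^ k
          + k * ∑ i ∈ Finset.Icc 1 ((j + 3) / 3), (2 * i - 1) ^ (k - 1)) := by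
  refine ⟨fun V _ G hdim => hdim ▸ card_le_maxOrder_dimK G j, ?_⟩
  have hcard : Fintype.card (Extremal.codes j (Fin k)) = maxOrder j k := by
    rw [Fintype.card_coe, Extremal.card_codes, Fintype.card_fin]
  refine ⟨_, (Extremal.graph j (Fin k)).overFin hcard, ?_, rfl⟩
  rw [(overFinIso _ hcard).dimK_eq, Extremal.dimK_graph, Fintype.card_fin]

/-- The maximum possible order of a graph `G` with `dim_j(G) = k` is
`(⌊2(j+1)/3⌋+1)^k + k * ∑_{i=1}^{⌈(j+1)/3⌉} (2i-1)^(k-1)`. -/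
theorem stmt1 (j k : ℕ) (hj : 1 ≤ j) (hk : 1 ≤ k) :
    (∀ (V : Type) [Fintype V] (G : SimpleGraph V),
      dimK G j = k →
      Fintype.card V ≤
        ((2 * (j + 1)) / 3 + 1) ^ k
          + k * ∑ i ∈ Finset.Icc 1 ((j + 3) / 3), (2 * i - 1) ^ (k - 1)) ∧
    (∃ (m : ℕ) (G : SimpleGraph (Fin m)),
      dimK G j = k ∧
      m = ((2 * (j + 1)) / 3 + 1) ^ k
          + k * ∑ i ∈ Finset.Icc 1 ((j + 3) / 3), (2 * i - 1) ^ (k - 1)) :=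
  stmt1_general j k
end

section
/- Let $G$ be a connected graph of order $n \ge 2$ and let $k$ be any positive integer. Then $1 \le \dim_k(G) \le n-1$; moreover, (a) $\dim_k(G) = 1$ if and only if $G$ is isomorphic to the path $P_i$ for some $2 \le i \le k+2$, and (b) $\dim_k(G) = n-1$ if and only if $G$ is the complete graph $K_n$. -/
open SimpleGraph

section aux

lemma edist_eq_dist' {V : Type*} {G : SimpleGraph V} {u v : V} (h : G.Reachable u v) :
    G.edist u v = G.dist u v :=
  (ENat.coe_toNat (by rwa [edist_ne_top_iff_reachable])).symm

lemma distK_eq {V : Type*} {G : SimpleGraph V} {k : ℕ} {x z : V} (h : G.Reachable x z) :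
    distK G k x z = ((min (G.dist x z) (k+1) : ℕ) : ℕ∞) := by
  rw [distK, edist_eq_dist' h]
  rfl

lemma distK_self {V : Type*} (G : SimpleGraph V) (k : ℕ) (x : V) : distK G k x x = 0 := by
  simp [distK, edist_self]

lemma distK_ne_zero {V : Type*} {G : SimpleGraph V} {k : ℕ} {x y : V} (h : x ≠ y) :
    distK G k x y ≠ 0 := by
  have h1 : 0 < G.edist x y := edist_pos_of_ne h
  have h2 : (0 : ℕ∞) < (k : ℕ∞) + 1 := by exact_mod_cast Nat.succ_pos k
  exact ne_of_gt (lt_min h1 h2)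

lemma isResolving_of {V : Type*} (G : SimpleGraph V) (k : ℕ) (S : Set V)
    (h : ∀ x ∉ S, ∀ y ∉ S, x ≠ y → ∃ z ∈ S, distK G k x z ≠ distK G k y z) :
    IsDistKResolving G k S := by
  intro x y hxy
  by_cases hx : x ∈ S
  · exact ⟨x, hx, by rw [distK_self]; exact (distK_ne_zero (Ne.symm hxy)).symm⟩
  by_cases hy : y ∈ S
  · exact ⟨y, hy, by rw [distK_self (x := y)]; exact distK_ne_zero hxy⟩
  exact h x hx y hy hxy

lemma exists_adj_pred {V : Type*} {G : SimpleGraph V} (hG : G.Connected) {z y : V} (h : z ≠ y) :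
    ∃ w, G.Adj y w ∧ G.dist z w + 1 = G.dist z y := by
  obtain ⟨p, hp⟩ := hG.exists_walk_length_eq_dist y z
  have hpos : 0 < G.dist y z := hG.pos_dist_of_ne h.symm
  have hnil : ¬ p.Nil := by rw [Walk.nil_iff_length_eq]; omega
  refine ⟨p.getVert 1, p.adj_snd hnil, ?_⟩
  have h1 : G.dist (p.getVert 1) z ≤ p.tail.length := G.dist_le p.tail
  have h2 : p.tail.length + 1 = p.length := p.length_tail_add_one hnil
  have h3 : G.dist z y ≤ G.dist z (p.getVert 1) + G.dist (p.getVert 1) y :=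
    hG.dist_triangle
  have h4 : G.dist (p.getVert 1) y ≤ 1 :=
    le_of_eq (dist_eq_one_iff_adj.mpr (p.adj_snd hnil).symm)
  have h5 : G.dist z (p.getVert 1) = G.dist (p.getVert 1) z := dist_comm ..
  have h6 : G.dist z y = G.dist y z := dist_comm ..
  omega

lemma exists_triple {V : Type*} {G : SimpleGraph V} (hG : G.Connected) (hne : G ≠ ⊤) :
    ∃ u x w, G.Adj u x ∧ G.Adj x w ∧ ¬ G.Adj u w ∧ u ≠ w := by
  by_contra hc
  push_neg at hc
  apply hne
  have key : ∀ m, ∀ a b : V, G.dist a b ≤ m → a ≠ b → G.Adj a b := by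
    intro m
    induction m with
    | zero =>
      intro a b hd hab
      exact absurd hd (by have := hG.pos_dist_of_ne hab; omega)
    | succ m ih =>
      intro a b hd hab
      rcases Nat.lt_or_ge (G.dist a b) 2 with h1 | h1
      · have : G.dist a b = 1 := by have := hG.pos_dist_of_ne hab; omega
        exact dist_eq_one_iff_adj.mp this
      · obtain ⟨w, hbw, hw⟩ := exists_adj_pred hG (z := a) (y := b) hab
        have haw : a ≠ w := by
          intro h; subst h
          rw [(hG.dist_eq_zero_iff).mpr rfl] at hw
          omega
        have hadj_aw : G.Adj a w := ih a w (by omega) haw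
        by_contra hab'
        exact hab (hc a w b hadj_aw hbw.symm hab')
  ext a b
  simp only [top_adj]
  exact ⟨fun h => h.ne, fun h => key (G.dist a b) a b le_rfl h⟩

lemma iso_edist_le {V W : Type*} {G : SimpleGraph V} {G' : SimpleGraph W} (e : G ≃g G')
    (x y : V) : G'.edist (e x) (e y) ≤ G.edist x y := by
  rw [edist_eq_sInf (G := G)]
  refine le_sInf ?_
  rintro _ ⟨p, rfl⟩
  simpa [Walk.length_map] using edist_le (p.map e.toHom)

lemma iso_edist {V W : Type*} {G : SimpleGraph V} {G' : SimpleGraph W} (e : G ≃g G')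
    (x y : V) : G'.edist (e x) (e y) = G.edist x y := by
  refine le_antisymm (iso_edist_le e x y) ?_
  have := iso_edist_le e.symm (e x) (e y)
  simpa using this

lemma pathGraph_walk_bound {i : ℕ} {a b : Fin i} (p : (pathGraph i).Walk a b) :
    b.val ≤ a.val + p.length := by
  induction p with
  | nil => simp
  | cons h q ih =>
    rw [pathGraph_adj] at h
    rw [Walk.length_cons]
    omega

lemma pathGraph_dist_zero {i : ℕ} (h0 : 0 < i) (b : Fin i) :
    (pathGraph i).dist ⟨0, h0⟩ b = b.val := by
  obtain ⟨j, rfl⟩ : ∃ j, i = j + 1 := ⟨i - 1, by omega⟩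
  have hconn := pathGraph_connected j
  refine le_antisymm ?_ ?_
  · have key : ∀ m (hm : m < j + 1), (pathGraph (j+1)).dist ⟨0, h0⟩ ⟨m, hm⟩ ≤ m := by
      intro m
      induction m with
      | zero => intro _; simp [SimpleGraph.dist_self]
      | succ m ih =>
        intro hm
        have hadj : (pathGraph (j+1)).Adj ⟨m, by omega⟩ ⟨m+1, hm⟩ := by
          rw [pathGraph_adj]; left; rfl
        have tri := hconn.dist_triangle (u := (⟨0, h0⟩ : Fin (j+1)))
          (v := ⟨m, by omega⟩) (w := ⟨m+1, hm⟩)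
        have h1 := ih (by omega)
        have h2 : (pathGraph (j+1)).dist ⟨m, by omega⟩ ⟨m+1, hm⟩ = 1 :=
          dist_eq_one_iff_adj.mpr hadj
        omega
    have hb : b = ⟨b.val, b.isLt⟩ := rfl
    rw [hb]
    exact key b.val b.isLt
  · obtain ⟨p, hp⟩ := hconn.exists_walk_length_eq_dist ⟨0, h0⟩ b
    have hbd := pathGraph_walk_bound p
    simp only [Fin.val_mk] at hbd
    omega

lemma enat_eq_two {d : ℕ∞} (h2 : d ≤ 2) (h0 : d ≠ 0) (h1 : d ≠ 1) : d = 2 := by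
  lift d to ℕ using ne_top_of_le_ne_top (by simp) h2
  have h2' : d ≤ 2 := by exact_mod_cast h2
  have h0' : d ≠ 0 := by exact_mod_cast h0
  have h1' : d ≠ 1 := by exact_mod_cast h1
  have : d = 2 := by omega
  exact_mod_cast this

end aux

/-- For a connected graph `G` of order `n ≥ 2` and any positive integer `k`:
`1 ≤ dimₖ(G) ≤ n-1`; `dimₖ(G) = 1` iff `G ≅ Pᵢ` for some `2 ≤ i ≤ k+2`;
and `dimₖ(G) = n-1` iff `G = Kₙ`. -/
theorem stmt4 {V : Type*} [Fintype V] (G : SimpleGraph V) (n : ℕ)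
    (hn : Fintype.card V = n) (h2 : 2 ≤ n) (hG : G.Connected) (k : ℕ) (hk : 1 ≤ k) :
    (1 ≤ dimK G k ∧ dimK G k ≤ n - 1) ∧
    (dimK G k = 1 ↔ ∃ i : ℕ, 2 ≤ i ∧ i ≤ k + 2 ∧ Nonempty (G ≃g pathGraph i)) ∧
    (dimK G k = n - 1 ↔ G = ⊤) := by
  classical
  obtain ⟨v₀, v₁, hv01⟩ := Fintype.exists_pair_of_one_lt_card (α := V) (by rw [hn]; omega)
  have hmem : n - 1 ∈ { m | ∃ S : Finset V, IsDistKResolving G k ↑S ∧ S.card = m } := by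
    refine ⟨Finset.univ.erase v₀, ?_, by
      rw [Finset.card_erase_of_mem (Finset.mem_univ v₀), Finset.card_univ, hn]⟩
    apply isResolving_of
    intro x hx y hy hxy
    exfalso
    simp only [Finset.coe_erase, Set.mem_diff, Finset.coe_univ, Set.mem_univ, true_and,
      Set.mem_singleton_iff, not_not] at hx hy
    exact hxy (hx.trans hy.symm)
  have hA_ne : { m | ∃ S : Finset V, IsDistKResolving G k ↑S ∧ S.card = m }.Nonempty :=
    ⟨_, hmem⟩
  have hdim_mem : ∃ S : Finset V, IsDistKResolving G k ↑S ∧ S.card = dimK G k :=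
    Nat.sInf_mem hA_ne
  have h0A : dimK G k ≠ 0 := by
    intro h0
    obtain ⟨S, hS, hScard⟩ := hdim_mem
    rw [h0, Finset.card_eq_zero] at hScard
    subst hScard
    obtain ⟨z, hz, -⟩ := hS v₀ v₁ hv01
    simp at hz
  have hge1 : 1 ≤ dimK G k := Nat.one_le_iff_ne_zero.mpr h0A
  have hle : dimK G k ≤ n - 1 := Nat.sInf_le hmem
  refine ⟨⟨hge1, hle⟩, ?_, ?_⟩
  · -- part (a)
    constructor
    · intro h1
      obtain ⟨S, hS, hScard⟩ := hdim_mem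
      rw [h1, Finset.card_eq_one] at hScard
      obtain ⟨z, rfl⟩ := hScard
      have hres : ∀ x y : V, x ≠ y → distK G k x z ≠ distK G k y z := by
        intro x y hxy
        obtain ⟨w, hw, hd⟩ := hS x y hxy
        simp only [Finset.coe_singleton, Set.mem_singleton_iff] at hw
        exact hw ▸ hd
      have hreach : ∀ x : V, G.Reachable x z := fun x => hG x z
      set f : V → ℕ := fun x => G.dist z x with hf
      have hresN : ∀ x y : V, x ≠ y → min (f x) (k+1) ≠ min (f y) (k+1) := by
        intro x y hxy hmin
        apply hres x y hxy
        rw [distK_eq (hreach x), distK_eq (hreach y)]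
        have e1 : G.dist x z = f x := dist_comm ..
        have e2 : G.dist y z = f y := dist_comm ..
        rw [e1, e2, hmin]
      have hinj : Function.Injective f := by
        intro a b hab
        by_contra hne
        exact hresN a b hne (by rw [hab])
      have hdown : ∀ x : V, f x ≠ 0 → ∃ w, f w + 1 = f x := by
        intro x hx
        have hzx : z ≠ x := by
          intro h; apply hx
          simp [hf, ← h, SimpleGraph.dist_self]
        obtain ⟨w, -, hw⟩ := exists_adj_pred hG hzx
        exact ⟨w, hw⟩
      have hchain : ∀ x : V, ∀ m : ℕ, ∃ w, f w = f x - m := by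
        intro x m
        induction m with
        | zero => exact ⟨x, rfl⟩
        | succ m ih =>
          obtain ⟨w, hw⟩ := ih
          rcases Nat.eq_zero_or_pos (f x - m) with h | h
          · exact ⟨w, by omega⟩
          · obtain ⟨w', hw'⟩ := hdown w (by omega)
            exact ⟨w', by omega⟩
      have hlt : ∀ x : V, f x < n := by
        by_contra hc
        push_neg at hc
        obtain ⟨x, hx⟩ := hc
        have hch := fun j : Fin (n+1) => hchain x j.val
        choose g hg using hch
        have hginj : Function.Injective g := by
          intro a b hab
          have := hg a
          rw [hab, hg b] at this
          have ha := a.isLt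
          have hb := b.isLt
          exact Fin.ext (by omega)
        have := Fintype.card_le_of_injective g hginj
        rw [hn] at this
        simp at this
      set F : V → Fin n := fun x => ⟨f x, hlt x⟩ with hF
      have hFinj : Function.Injective F := by
        intro a b h
        exact hinj (by simpa [hF, Fin.mk.injEq] using h)
      have hbij : Function.Bijective F :=
        (Fintype.bijective_iff_injective_and_card F).mpr ⟨hFinj, by simp [hn]⟩
      have hnk : n ≤ k + 2 := by
        by_contra hc
        push_neg at hc
        obtain ⟨a, ha⟩ := hbij.surjective ⟨k+1, by omega⟩
        obtain ⟨b, hb⟩ := hbij.surjective ⟨k+2, by omega⟩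
        have hfa : f a = k + 1 := by
          have := congrArg Fin.val ha; simpa [hF] using this
        have hfb : f b = k + 2 := by
          have := congrArg Fin.val hb; simpa [hF] using this
        have hab : a ≠ b := by intro h; rw [h, hfb] at hfa; omega
        exact hresN a b hab (by rw [hfa, hfb]; omega)
      refine ⟨n, h2, hnk, ⟨⟨Equiv.ofBijective F hbij, ?_⟩⟩⟩
      intro a b
      simp only [Equiv.ofBijective_apply, pathGraph_adj, hF]
      constructor
      · rintro (h | h)
        · -- f a + 1 = f b
          have hzb : z ≠ b := by
            intro h'
            have : f b = 0 := by simp [hf, ← h', SimpleGraph.dist_self]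
            omega
          obtain ⟨w, hbw, hw⟩ := exists_adj_pred hG hzb
          have hw' : f w + 1 = f b := hw
          have hwa : w = a := hinj (by omega)
          exact (hwa ▸ hbw).symm
        · have hza : z ≠ a := by
            intro h'
            have : f a = 0 := by simp [hf, ← h', SimpleGraph.dist_self]
            omega
          obtain ⟨w, haw, hw⟩ := exists_adj_pred hG hza
          have hw' : f w + 1 = f a := hw
          have hwb : w = b := hinj (by omega)
          exact hwb ▸ haw
      · intro hadj
        have t1 : G.dist z b ≤ G.dist z a + G.dist a b := hG.dist_triangle
        have t2 : G.dist z a ≤ G.dist z b + G.dist b a := hG.dist_triangle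
        have d1 : G.dist a b = 1 := dist_eq_one_iff_adj.mpr hadj
        have d2 : G.dist b a = 1 := dist_eq_one_iff_adj.mpr hadj.symm
        have hne : f a ≠ f b := fun h => hadj.ne (hinj h)
        have e1 : f a = G.dist z a := rfl
        have e2 : f b = G.dist z b := rfl
        omega
    · rintro ⟨i, hi2, hik, ⟨e⟩⟩
      have h0i : 0 < i := by omega
      set z := e.symm ⟨0, h0i⟩ with hz
      have hconn : (pathGraph i).Connected := by
        obtain ⟨j, rfl⟩ : ∃ j, i = j + 1 := ⟨i - 1, by omega⟩
        exact pathGraph_connected j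
      have hgen : ∀ v : V, distK G k v z = (((e v).val : ℕ) : ℕ∞) := by
        intro v
        have h1 : G.edist v z = (pathGraph i).edist (e v) (e z) := (iso_edist e v z).symm
        have h2 : e z = ⟨0, h0i⟩ := e.apply_symm_apply _
        have h3 : (pathGraph i).edist (e v) ⟨0, h0i⟩
            = ((pathGraph i).dist (e v) ⟨0, h0i⟩ : ℕ) := edist_eq_dist' (hconn _ _)
        have h4 : (pathGraph i).dist (e v) ⟨0, h0i⟩ = (e v).val := by
          rw [SimpleGraph.dist_comm]; exact pathGraph_dist_zero h0i (e v)
        rw [distK, h1, h2, h3, h4, min_eq_left ?_]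
        have hval : (e v).val ≤ k + 1 := by have := (e v).isLt; omega
        exact_mod_cast hval
      have hmem1 : 1 ∈ { m | ∃ S : Finset V, IsDistKResolving G k ↑S ∧ S.card = m } := by
        refine ⟨{z}, ?_, Finset.card_singleton z⟩
        intro x y hxy
        refine ⟨z, by simp, ?_⟩
        rw [hgen x, hgen y]
        intro hcast
        exact hxy (e.injective (Fin.val_injective (by exact_mod_cast hcast)))
      have hle1 : dimK G k ≤ 1 := Nat.sInf_le hmem1
      omega
  · -- part (b)
    constructor
    · intro hd
      by_contra hne_top
      obtain ⟨u, x, w, hux, hxw, hnuw, huw⟩ := exists_triple hG hne_top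
      have hxu : x ≠ u := hux.ne'
      set S : Finset V := (Finset.univ.erase u).erase x with hS
      have hcard : S.card = n - 2 := by
        rw [hS, Finset.card_erase_of_mem (Finset.mem_erase.mpr ⟨hxu, Finset.mem_univ x⟩),
          Finset.card_erase_of_mem (Finset.mem_univ u), Finset.card_univ, hn]
        omega
      have hwS : w ∈ S := Finset.mem_erase.mpr ⟨hxw.ne', Finset.mem_erase.mpr ⟨huw.symm, Finset.mem_univ w⟩⟩
      have heuw : G.edist u w = 2 := by
        refine enat_eq_two ?_ ?_ ?_
        · calc G.edist u w ≤ G.edist u x + G.edist x w := SimpleGraph.edist_triangle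
            _ = 2 := by
              rw [edist_eq_one_iff_adj.mpr hux, edist_eq_one_iff_adj.mpr hxw]; rfl
        · simp [edist_eq_zero_iff, huw]
        · rw [Ne, edist_eq_one_iff_adj]; exact hnuw
      have hexw : G.edist x w = 1 := edist_eq_one_iff_adj.mpr hxw
      have hkey : distK G k u w ≠ distK G k x w := by
        rw [distK, distK, heuw, hexw]
        have h2k : (2 : ℕ∞) ≤ (k : ℕ∞) + 1 := by
          have : ((2:ℕ) : ℕ∞) ≤ ((k+1 : ℕ) : ℕ∞) := by exact_mod_cast Nat.succ_le_succ hk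
          simpa using this
        have h1k : (1 : ℕ∞) ≤ (k : ℕ∞) + 1 := le_trans (by norm_num) h2k
        rw [min_eq_left h2k, min_eq_left h1k]
        norm_num
      have hres : IsDistKResolving G k ↑S := by
        apply isResolving_of
        intro a ha b hb hab
        have ha' : a = u ∨ a = x := by
          simp only [hS, Finset.coe_erase, Set.mem_diff, Finset.coe_univ, Set.mem_univ,
            true_and, Set.mem_singleton_iff, not_and, not_not] at ha
          by_cases h : a = x
          · exact Or.inr h
          · exact Or.inl (by tauto)
        have hb' : b = u ∨ b = x := by
          simp only [hS, Finset.coe_erase, Set.mem_diff, Finset.coe_univ, Set.mem_univ,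
            true_and, Set.mem_singleton_iff, not_and, not_not] at hb
          by_cases h : b = x
          · exact Or.inr h
          · exact Or.inl (by tauto)
        refine ⟨w, hwS, ?_⟩
        rcases ha' with rfl | rfl <;> rcases hb' with rfl | rfl
        · exact absurd rfl hab
        · exact hkey
        · exact hkey.symm
        · exact absurd rfl hab
      have : dimK G k ≤ n - 2 := Nat.sInf_le ⟨S, hres, hcard⟩
      omega
    · intro htop
      subst htop
      refine le_antisymm hle ?_
      obtain ⟨S, hS, hScard⟩ := hdim_mem
      rw [← hScard]
      by_contra hlt2
      push_neg at hlt2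
      have hcompl : 2 ≤ Sᶜ.card := by
        rw [Finset.card_compl, hn]; omega
      obtain ⟨a, ha, b, hb, hab⟩ := Finset.one_lt_card.mp hcompl
      obtain ⟨z, hz, hzd⟩ := hS a b hab
      rw [Finset.mem_coe] at hz
      have haz : a ≠ z := fun h => (Finset.mem_compl.mp ha) (h ▸ hz)
      have hbz : b ≠ z := fun h => (Finset.mem_compl.mp hb) (h ▸ hz)
      apply hzd
      have h1k : (1 : ℕ∞) ≤ (k : ℕ∞) + 1 := le_add_self
      rw [distK, distK, edist_top_of_ne haz, edist_top_of_ne hbz]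
end

section
/- For each integer $k \ge 1$ and each integer $\beta \ge 3$, there exists a non-planar finite simple connected graph $G$ with $\dim_k(G) = \beta$. -/
open SimpleGraph

/-- `H` is a minor of `G`: there is an assignment of disjoint, nonempty, connected
branch sets in `G` to the vertices of `H` such that edges of `H` are realized by
edges of `G` between the corresponding branch sets. -/
def IsMinor {V W : Type*} (G : SimpleGraph V) (H : SimpleGraph W) : Prop :=
  ∃ f : W → Set V,
    (∀ w, (f w).Nonempty) ∧
    (∀ w, (G.induce (f w)).Connected) ∧
    (∀ w w', w ≠ w' → Disjoint (f w) (f w')) ∧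
    (∀ w w', H.Adj w w' → ∃ a ∈ f w, ∃ b ∈ f w', G.Adj a b)

/-- By Wagner's theorem, a graph is non-planar iff it has `K₅` or `K₃,₃` as a minor. -/
def NonPlanar {V : Type*} (G : SimpleGraph V) : Prop :=
  IsMinor G (⊤ : SimpleGraph (Fin 5)) ∨ IsMinor G (completeBipartiteGraph (Fin 3) (Fin 3))

/-!
For `β ≥ 4` the complete graph `K_{β+1}` works: the complement of any vertex resolves it, while two
vertices outside a smaller set `S` are at distance one from every vertex of `S`.

For `β = 3` take a clique on `3, …, 9` and three independent landmarks `0, 1, 2`, the clique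
vertex `y` being adjacent to the landmarks `i` in the binary expansion of `y - 2 ∈ {1, …, 7}`.
Vertex `9` is adjacent to everything, so the diameter is `2 ≤ k + 1` and `dₖ = d`. The ten
vectors of distances to the landmarks are distinct, while two vertices produce at most `3² = 9`
such vectors. Both graphs contain `K₅`.
-/

namespace SimpleGraph

variable {V W : Type*} {G : SimpleGraph V} {k : ℕ}

lemma isMinor_of_isContained {H : SimpleGraph W} (h : H ⊑ G) : IsMinor G H := by
  obtain ⟨f⟩ := h
  refine ⟨fun w => {f w}, fun w => Set.singleton_nonempty _, fun w => ?_,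
    fun w w' hne => Set.disjoint_singleton.2 (f.injective.ne hne),
    fun w w' hadj => ⟨f w, rfl, f w', rfl, f.toHom.map_adj hadj⟩⟩
  have : Subsingleton ({f w} : Set V) := Set.subsingleton_singleton.coe_sort
  have : Nonempty ({f w} : Set V) := ⟨⟨f w, rfl⟩⟩
  exact ⟨Preconnected.of_subsingleton⟩

lemma nonPlanar_of_not_cliqueFree (h : ¬ G.CliqueFree 5) : NonPlanar G :=
  Or.inl (isMinor_of_isContained ((not_cliqueFree_iff_top_isContained 5).1 h))

lemma distK_eq_edist {x y : V} (h : G.edist x y ≤ k + 1) : distK G k x y = G.edist x y :=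
  min_eq_left h

@[simp]
lemma distK_self (x : V) : distK G k x x = 0 := by
  simp [distK]

lemma distK_eq_zero_iff {x y : V} : distK G k x y = 0 ↔ x = y := by
  simp [distK, edist_eq_zero_iff]

lemma isDistKResolving_iff_of_ediam_le (h : G.ediam ≤ k + 1) {S : Set V} :
    IsDistKResolving G k S ↔ ∀ x y, x ≠ y → ∃ z ∈ S, G.edist x z ≠ G.edist y z := by
  simp only [IsDistKResolving, distK_eq_edist (edist_le_ediam.trans h)]

lemma isDistKResolving_compl_singleton (a : V) : IsDistKResolving G k {a}ᶜ := by
  intro x y hxy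
  by_cases hx : x = a
  · exact ⟨y, by simp [← hx, Ne.symm hxy], by simp [distK_eq_zero_iff, hxy]⟩
  · exact ⟨x, hx, by simpa [eq_comm, distK_eq_zero_iff] using hxy⟩

lemma card_le_pow_of_isDistKResolving [Fintype V] {d : ℕ} (hd : G.ediam ≤ d) {S : Finset V}
    (hS : IsDistKResolving G k S) : Fintype.card V ≤ (d + 1) ^ S.card := by
  classical
  have hle (x z : V) : distK G k x z ≤ d := (min_le_left _ _).trans (edist_le_ediam.trans hd)
  have hfin (x z : V) : distK G k x z ≠ ⊤ := ((hle x z).trans_lt (ENat.natCast_lt_top d)).ne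
  let code (x : V) (z : S) : Fin (d + 1) :=
    ⟨(distK G k x z).toNat, Nat.lt_succ_of_le (ENat.toNat_le_of_le_natCast (hle x z))⟩
  have hcode : Function.Injective code := by
    intro x y hxy
    by_contra hne
    obtain ⟨z, hz, hdist⟩ := hS x y hne
    apply hdist
    rw [← ENat.natCast_toNat (hfin x z), ← ENat.natCast_toNat (hfin y z)]
    exact congrArg _ (congrArg Fin.val (congrFun hxy ⟨z, hz⟩))
  simpa using Fintype.card_le_of_injective code hcode

lemma dimK_eq_of_isDistKResolving [Fintype V] {S : Finset V} (hS : IsDistKResolving G k S)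
    (hmin : ∀ T : Finset V, IsDistKResolving G k T → S.card ≤ T.card) : dimK G k = S.card :=
  le_antisymm (Nat.sInf_le ⟨S, hS, rfl⟩) (le_csInf ⟨_, S, hS, rfl⟩ (by
    rintro m ⟨T, hT, rfl⟩
    exact hmin T hT))

lemma ediam_le_two_of_forall_adj (c : V) (hc : ∀ v, c ≠ v → G.Adj c v) : G.ediam ≤ 2 :=
  calc G.ediam ≤ 2 * G.eccent c := ediam_le_two_mul_eccent c
    _ ≤ 2 * 1 := by gcongr; exact (eccent_le_one_iff c).2 hc
    _ = 2 := mul_one 2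

lemma edist_eq_of_ediam_le_two [DecidableEq V] [DecidableRel G.Adj] (h : G.ediam ≤ 2)
    (x y : V) : G.edist x y = ((if x = y then 0 else if G.Adj x y then 1 else 2 : ℕ) : ℕ∞) := by
  split_ifs with hxy hadj
  · simp [hxy]
  · simpa using edist_eq_one_iff_adj.2 hadj
  · have hle : G.edist x y ≤ 2 := edist_le_ediam.trans h
    have hne0 : G.edist x y ≠ 0 := by simpa using hxy
    have hne1 : G.edist x y ≠ 1 := fun h1 => hadj (edist_eq_one_iff_adj.1 h1)
    lift G.edist x y to ℕ using (hle.trans_lt (by decide)).ne with e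
    norm_cast at *
    omega

lemma card_sub_one_le_of_isDistKResolving_top [Fintype V] {T : Finset V}
    (hT : IsDistKResolving (⊤ : SimpleGraph V) k T) : Fintype.card V - 1 ≤ T.card := by
  classical
  by_contra! hlt
  obtain ⟨x, hx, y, hy, hxy⟩ := Finset.one_lt_card.1 (show 1 < Tᶜ.card by
    rw [Finset.card_compl]; omega)
  obtain ⟨z, hz, hdist⟩ := hT x y hxy
  have hxz : x ≠ z := by rintro rfl; exact Finset.mem_compl.1 hx hz
  have hyz : y ≠ z := by rintro rfl; exact Finset.mem_compl.1 hy hz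
  exact hdist (by simp [distK, edist_top_of_ne hxz, edist_top_of_ne hyz])

lemma dimK_top [Fintype V] [Nonempty V] : dimK (⊤ : SimpleGraph V) k = Fintype.card V - 1 := by
  classical
  let a := Classical.arbitrary V
  have hS : IsDistKResolving (⊤ : SimpleGraph V) k ↑({a}ᶜ : Finset V) := by
    simpa using isDistKResolving_compl_singleton a
  rw [dimK_eq_of_isDistKResolving hS fun T hT => ?_] <;>
    rw [Finset.card_compl, Finset.card_singleton]
  exact card_sub_one_le_of_isDistKResolving_top hT

end SimpleGraph

def landmarkGraph : SimpleGraph (Fin 10) :=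
  SimpleGraph.fromRel fun x y =>
    3 ≤ x.val ∧ 3 ≤ y.val ∨ x.val < 3 ∧ 3 ≤ y.val ∧ (y.val - 2).testBit x.val

instance : DecidableRel landmarkGraph.Adj := fun x y =>
  decidable_of_iff' _ (SimpleGraph.fromRel_adj _ x y)

namespace landmarkGraph

open SimpleGraph

lemma ediam_le_two : landmarkGraph.ediam ≤ 2 :=
  ediam_le_two_of_forall_adj 9 (by decide)

lemma connected : landmarkGraph.Connected :=
  connected_iff_ediam_ne_top.2 (ediam_le_two.trans_lt (by decide)).ne

lemma nonPlanar : NonPlanar landmarkGraph :=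
  nonPlanar_of_not_cliqueFree (IsNClique.not_cliqueFree (s := {5, 6, 7, 8, 9}) (by decide))

lemma isDistKResolving {k : ℕ} (hk : 1 ≤ k) :
    IsDistKResolving landmarkGraph k ↑({0, 1, 2} : Finset (Fin 10)) := by
  have hdiam : landmarkGraph.ediam ≤ k + 1 :=
    ediam_le_two.trans (by exact_mod_cast Nat.succ_le_succ hk)
  rw [isDistKResolving_iff_of_ediam_le hdiam]
  simp only [edist_eq_of_ediam_le_two ediam_le_two, ne_eq, Nat.cast_inj]
  decide

lemma dimK_eq_three {k : ℕ} (hk : 1 ≤ k) : dimK landmarkGraph k = 3 :=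
  dimK_eq_of_isDistKResolving (isDistKResolving hk) fun T hT => by
    have h := card_le_pow_of_isDistKResolving (d := 2) ediam_le_two hT
    norm_num at h
    exact (Nat.pow_lt_pow_iff_right (by norm_num)).1 (by omega : 3 ^ 2 < 3 ^ T.card)

end landmarkGraph

/-- For each integer `k ≥ 1` and each integer `β ≥ 3`, there exists a non-planar
connected graph `G` with `dimₖ(G) = β`. -/
theorem stmt8 (k β : ℕ) (hk : 1 ≤ k) (hβ : 3 ≤ β) :
    ∃ (n : ℕ) (G : SimpleGraph (Fin n)), G.Connected ∧ NonPlanar G ∧ dimK G k = β := by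
  obtain rfl | hβ4 := hβ.eq_or_lt
  · exact ⟨10, landmarkGraph, landmarkGraph.connected, landmarkGraph.nonPlanar,
      landmarkGraph.dimK_eq_three hk⟩
  · have hK5 : completeGraph (Fin 5) ⊑ (⊤ : SimpleGraph (Fin (β + 1))) :=
      (Embedding.completeGraph (Fin.castLEEmb (by omega))).isContained
    exact ⟨β + 1, ⊤, connected_top, nonPlanar_of_not_cliqueFree hK5.not_cliqueFree,
      by simp [dimK_top]⟩
end

section
/- For $m \ge 2$, let $G = K_{a_1, a_2, \ldots, a_m}$ be the complete $m$-partite graph of order $n = \sum_{i=1}^{m} a_i$ (each $a_i \ge 1$), and let $s$ be the number of partite sets consisting of exactly one vertex. Then for any positive integer $k$, $\dim_k(G) = n - m$ if $s = 0$, and $\dim_k(G) = n - m + s - 1$ if $s \neq 0$. -/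
open SimpleGraph

section Aux

variable {m : ℕ} {a : Fin m → ℕ} {k : ℕ}

local notation "V'" => (i : Fin m) × Fin (a i)
local notation "G'" => completeMultipartiteGraph fun i => Fin (a i)

lemma cmp_adj {x y : V'} : (G').Adj x y ↔ x.1 ≠ y.1 := by
  simp [completeMultipartiteGraph]

lemma dk_self (x : V') : distK G' k x x = 0 := by
  simp [distK, SimpleGraph.edist_self]

lemma dk_one (hk : 1 ≤ k) {x z : V'} (h : x.1 ≠ z.1) : distK G' k x z = 1 := by
  have : (G').edist x z = 1 := SimpleGraph.edist_eq_one_iff_adj.mpr (cmp_adj.mpr h)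
  rw [distK, this]
  have h1 : (1 : ℕ∞) ≤ (k : ℕ∞) + 1 := le_add_self
  simpa using h1

lemma dk_two (hm : 2 ≤ m) (ha : ∀ i, 1 ≤ a i) (hk : 1 ≤ k) {x z : V'}
    (hxz : x ≠ z) (h : x.1 = z.1) : distK G' k x z = 2 := by
  have : Nontrivial (Fin m) := Fin.nontrivial_iff_two_le.mpr hm
  obtain ⟨j, hj⟩ := exists_ne x.1
  have hw1 : (G').Adj x ⟨j, ⟨0, ha j⟩⟩ := cmp_adj.mpr (Ne.symm hj)
  have hw2 : (G').Adj ⟨j, ⟨0, ha j⟩⟩ z := cmp_adj.mpr (by simp [← h]; exact hj)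
  have hle : (G').edist x z ≤ 2 := by
    have := SimpleGraph.edist_le (SimpleGraph.Walk.cons hw1 (SimpleGraph.Walk.cons hw2 SimpleGraph.Walk.nil))
    simpa using this
  have hge : 2 ≤ (G').edist x z := by
    have h0 : 0 < (G').edist x z := SimpleGraph.edist_pos_of_ne hxz
    have h1 : (G').edist x z ≠ 1 := by
      rw [Ne, SimpleGraph.edist_eq_one_iff_adj, cmp_adj]
      simp [h]
    have : 1 < (G').edist x z := lt_of_le_of_ne (Order.one_le_iff_pos.mpr h0) (Ne.symm h1)
    exact Order.add_one_le_of_lt this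
  have he : (G').edist x z = 2 := le_antisymm hle hge
  rw [distK, he]
  have h2 : (2 : ℕ∞) ≤ (k : ℕ∞) + 1 := by
    have : ((2:ℕ) : ℕ∞) ≤ ((k+1:ℕ) : ℕ∞) := by exact_mod_cast Nat.succ_le_succ hk
    simpa using this
  simpa using h2

end Aux

section Aux2

variable {m : ℕ} {a : Fin m → ℕ} {k : ℕ}

local notation "V'" => (i : Fin m) × Fin (a i)
local notation "G'" => completeMultipartiteGraph fun i => Fin (a i)

lemma mem_image_iff (ha : ∀ i, 1 ≤ a i) (A : Finset (Fin m)) (x : V') :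
    x ∈ A.image (fun i => (⟨i, ⟨0, ha i⟩⟩ : V')) ↔ x.1 ∈ A ∧ (x.2 : ℕ) = 0 := by
  constructor
  · rintro hx
    rw [Finset.mem_image] at hx
    obtain ⟨i, hi, rfl⟩ := hx
    exact ⟨hi, rfl⟩
  · rintro ⟨h1, h2⟩
    rw [Finset.mem_image]
    obtain ⟨x1, x2⟩ := x
    have hx2 : x2 = ⟨0, ha x1⟩ := by
      apply Fin.ext
      simpa using h2
    subst hx2
    exact ⟨x1, h1, rfl⟩

lemma resolving_compl (hm : 2 ≤ m) (ha : ∀ i, 1 ≤ a i) (hk : 1 ≤ k)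
    (A : Finset (Fin m)) (hA2 : ∀ i ∈ A, ∀ j ∈ A, a i = 1 → a j = 1 → i = j) :
    IsDistKResolving G' k ↑((A.image fun i => (⟨i, ⟨0, ha i⟩⟩ : V'))ᶜ) := by
  set M := A.image fun i => (⟨i, ⟨0, ha i⟩⟩ : V') with hM
  intro x y hxy
  by_cases hf : x.1 = y.1
  · -- same part: one of x, y is outside M
    have hone : x ∉ M ∨ y ∉ M := by
      by_contra hc
      push_neg at hc
      obtain ⟨hxM, hyM⟩ := hc
      rw [mem_image_iff ha] at hxM hyM
      apply hxy
      obtain ⟨x1, x2⟩ := x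
      obtain ⟨y1, y2⟩ := y
      simp only at hf
      subst hf
      simp only at hxM hyM
      congr 1
      exact Fin.ext (hxM.2.trans hyM.2.symm)
    rcases hone with h | h
    · refine ⟨x, by simpa using h, ?_⟩
      rw [dk_self, dk_two hm ha hk (Ne.symm hxy) hf.symm]
      decide
    · refine ⟨y, by simpa using h, ?_⟩
      rw [dk_self, dk_two hm ha hk hxy hf]
      decide
  · -- different parts
    have key : ∀ z : V', z ∉ M → (z.1 = x.1 ∨ z.1 = y.1) →
        distK G' k x z ≠ distK G' k y z := by
      rintro z hz (h | h)
      · rw [dk_one hk (fun hc => hf (hc.trans h).symm : ¬ y.1 = z.1)]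
        rcases eq_or_ne x z with rfl | hne
        · rw [dk_self]; decide
        · rw [dk_two hm ha hk hne h.symm]; decide
      · rw [dk_one hk (fun hc => hf (hc.trans h) : ¬ x.1 = z.1)]
        rcases eq_or_ne y z with rfl | hne
        · rw [dk_self]; decide
        · rw [dk_two hm ha hk hne h.symm]; decide
    have hzex : ∃ z : V', z ∉ M ∧ (z.1 = x.1 ∨ z.1 = y.1) := by
      by_cases h2 : 2 ≤ a x.1
      · refine ⟨⟨x.1, ⟨1, h2⟩⟩, ?_, Or.inl rfl⟩
        rw [mem_image_iff ha]
        simp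
      · by_cases h3 : 2 ≤ a y.1
        · refine ⟨⟨y.1, ⟨1, h3⟩⟩, ?_, Or.inr rfl⟩
          rw [mem_image_iff ha]
          simp
        · have hx1 : a x.1 = 1 := le_antisymm (by omega) (ha _)
          have hy1 : a y.1 = 1 := le_antisymm (by omega) (ha _)
          by_cases hxM : x ∈ M
          · refine ⟨y, ?_, Or.inr rfl⟩
            intro hyM
            rw [mem_image_iff ha] at hxM hyM
            exact hf (hA2 _ hxM.1 _ hyM.1 hx1 hy1)
          · exact ⟨x, hxM, Or.inl rfl⟩
    obtain ⟨z, hz1, hz2⟩ := hzex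
    exact ⟨z, by simpa using hz1, key z hz1 hz2⟩

lemma card_compl_image (ha : ∀ i, 1 ≤ a i) (A : Finset (Fin m)) :
    ((A.image fun i => (⟨i, ⟨0, ha i⟩⟩ : V'))ᶜ).card = (∑ i, a i) - A.card := by
  rw [Finset.card_compl, Finset.card_image_of_injective _
    (fun i j h => congrArg Sigma.fst h)]
  congr 1
  simp [Fintype.card_sigma]

lemma lower_bound (hm : 2 ≤ m) (ha : ∀ i, 1 ≤ a i) (hk : 1 ≤ k)
    (S : Finset ((i : Fin m) × Fin (a i))) (hS : IsDistKResolving G' k ↑S) :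
    (∑ i, a i) ≤ S.card + (m - (Finset.univ.filter fun i => a i = 1).card)
      + min (Finset.univ.filter fun i => a i = 1).card 1 := by
  classical
  set s := (Finset.univ.filter fun i => a i = 1).card with hs
  set d : Fin m → ℕ := fun i => (Sᶜ.filter fun x => x.1 = i).card with hd
  have hsum : Sᶜ.card = ∑ i, d i :=
    Finset.card_eq_sum_card_fiberwise (fun x _ => Finset.mem_univ x.1)
  have hd1 : ∀ i, d i ≤ 1 := by
    intro i
    by_contra hcon
    push_neg at hcon
    rw [Finset.one_lt_card] at hcon
    obtain ⟨x, hx, y, hy, hxy⟩ := hcon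
    simp only [Finset.mem_filter, Finset.mem_compl] at hx hy
    obtain ⟨z, hzS, hzne⟩ := hS x y hxy
    apply hzne
    have hzx : x ≠ z := fun h => hx.1 (h ▸ hzS)
    have hzy : y ≠ z := fun h => hy.1 (h ▸ hzS)
    by_cases hzi : z.1 = i
    · rw [dk_two hm ha hk hzx (hx.2.trans hzi.symm),
        dk_two hm ha hk hzy (hy.2.trans hzi.symm)]
    · rw [dk_one hk (fun h => hzi (h ▸ hx.2 : z.1 = i) : ¬ x.1 = z.1),
        dk_one hk (fun h => hzi (h ▸ hy.2 : z.1 = i) : ¬ y.1 = z.1)]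
  set T : Finset (Fin m) := Finset.univ.filter fun i => a i = 1 ∧ d i ≠ 0 with hT
  have hT1 : T.card ≤ 1 := by
    by_contra hcon
    push_neg at hcon
    rw [Finset.one_lt_card] at hcon
    obtain ⟨i, hi, j, hj, hij⟩ := hcon
    simp only [hT, Finset.mem_filter] at hi hj
    obtain ⟨x, hx⟩ := Finset.card_ne_zero.mp hi.2.2
    obtain ⟨y, hy⟩ := Finset.card_ne_zero.mp hj.2.2
    simp only [Finset.mem_filter, Finset.mem_compl] at hx hy
    have hxy : x ≠ y := fun h => hij ((hx.2.symm.trans (congrArg Sigma.fst h)).trans hy.2)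
    obtain ⟨z, hzS, hzne⟩ := hS x y hxy
    apply hzne
    have hzx : ¬ x.1 = z.1 := by
      intro h
      have : Subsingleton (Fin (a i)) := by
        rw [Fin.subsingleton_iff_le_one, hi.2.1]
      apply hx.1
      have hzi : z.1 = i := h.symm.trans hx.2
      obtain ⟨z1, z2⟩ := z
      obtain ⟨x1, x2⟩ := x
      simp only at hzi hx
      subst hzi
      have hx1 : x1 = z1 := hx.2
      subst hx1
      have : x2 = z2 := Subsingleton.elim _ _
      rw [← this] at hzS
      exact hzS
    have hzy : ¬ y.1 = z.1 := by
      intro h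
      have : Subsingleton (Fin (a j)) := by
        rw [Fin.subsingleton_iff_le_one, hj.2.1]
      apply hy.1
      have hzj : z.1 = j := h.symm.trans hy.2
      obtain ⟨z1, z2⟩ := z
      obtain ⟨y1, y2⟩ := y
      simp only at hzj hy
      subst hzj
      have hy1 : y1 = z1 := hy.2
      subst hy1
      have : y2 = z2 := Subsingleton.elim _ _
      rw [← this] at hzS
      exact hzS
    rw [dk_one hk hzx, dk_one hk hzy]
  have hsplit : ∑ i, d i ≤ (m - s) + min s 1 := by
    have h1 : ∑ i ∈ Finset.univ.filter (fun i => a i = 1), d i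
        + ∑ i ∈ Finset.univ.filter (fun i => ¬ a i = 1), d i = ∑ i, d i :=
      Finset.sum_filter_add_sum_filter_not _ _ _
    have h2 : ∑ i ∈ Finset.univ.filter (fun i => ¬ a i = 1), d i ≤ m - s := by
      calc ∑ i ∈ Finset.univ.filter (fun i => ¬ a i = 1), d i
          ≤ ∑ _i ∈ Finset.univ.filter (fun i => ¬ a i = 1), 1 :=
            Finset.sum_le_sum (fun i _ => hd1 i)
        _ = (Finset.univ.filter (fun i => ¬ a i = 1)).card := by simp
        _ = m - s := by
            have := Finset.card_filter_add_card_filter_not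
              (s := (Finset.univ : Finset (Fin m))) (p := fun i => a i = 1)
            simp only [Finset.card_univ, Fintype.card_fin] at this
            omega
    have h3 : ∑ i ∈ Finset.univ.filter (fun i => a i = 1), d i ≤ min s 1 := by
      rcases Finset.eq_empty_or_nonempty T with hTe | hTn
      · have : ∀ i ∈ Finset.univ.filter (fun i => a i = 1), d i = 0 := by
          intro i hi
          simp only [Finset.mem_filter] at hi
          by_contra hdi
          have : i ∈ T := by simp [hT, hi.2, hdi]
          simp [hTe] at this
        rw [Finset.sum_congr rfl this]
        simp
      · obtain ⟨i₀, hi₀⟩ := hTn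
        have hmin : 1 ≤ min s 1 := by
          simp only [hT, Finset.mem_filter] at hi₀
          have : i₀ ∈ Finset.univ.filter fun i => a i = 1 := by
            simp [hi₀.2.1]
          have := Finset.card_pos.mpr ⟨i₀, this⟩
          omega
        calc ∑ i ∈ Finset.univ.filter (fun i => a i = 1), d i
            ≤ ∑ i ∈ Finset.univ.filter (fun i => a i = 1),
              (if i = i₀ then 1 else 0) := by
              apply Finset.sum_le_sum
              intro i hi
              simp only [Finset.mem_filter] at hi
              by_cases hii : i = i₀
              · simp [hii, hd1 i₀]
              · simp only [hii, if_false]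
                by_contra hdi
                have hiT : i ∈ T := by
                  simp only [hT, Finset.mem_filter]
                  exact ⟨Finset.mem_univ i, hi.2, by omega⟩
                have : 1 < T.card := Finset.one_lt_card.mpr ⟨i, hiT, i₀, hi₀, hii⟩
                omega
          _ ≤ 1 := by
              rw [Finset.sum_ite_eq' _ i₀]
              split <;> simp
          _ ≤ min s 1 := hmin
    rw [← h1]
    omega
  have htot : (∑ i, a i) = S.card + Sᶜ.card := by
    have h1 : S.card + Sᶜ.card = Fintype.card V' := Finset.card_add_card_compl S
    simp only [Fintype.card_sigma, Fintype.card_fin] at h1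
    omega
  calc (∑ i, a i) = S.card + Sᶜ.card := htot
    _ = S.card + ∑ i, d i := by rw [hsum]
    _ ≤ S.card + ((m - s) + min s 1) := Nat.add_le_add_left hsplit _
    _ = S.card + (m - s) + min s 1 := by omega

end Aux2

/-- For the complete `m`-partite graph (`m ≥ 2`) with part sizes `a₁, …, aₘ ≥ 1`,
order `n = ∑ aᵢ`, and `s` singleton parts: for any positive integer `k`,
`dimₖ = n - m` if `s = 0` and `dimₖ = n - m + s - 1` otherwise. -/
theorem stmt11 (m : ℕ) (hm : 2 ≤ m) (a : Fin m → ℕ) (ha : ∀ i, 1 ≤ a i)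
    (k : ℕ) (hk : 1 ≤ k) :
    ((Finset.univ.filter fun i => a i = 1).card = 0 →
      dimK (completeMultipartiteGraph fun i => Fin (a i)) k = (∑ i, a i) - m) ∧
    ((Finset.univ.filter fun i => a i = 1).card ≠ 0 →
      dimK (completeMultipartiteGraph fun i => Fin (a i)) k =
        (∑ i, a i) - m + (Finset.univ.filter fun i => a i = 1).card - 1) := by
  have hsm : (Finset.univ.filter fun i => a i = 1).card ≤ m := by
    have := Finset.card_filter_le (Finset.univ : Finset (Fin m)) (fun i => a i = 1)
    simpa using this
  have hnm : m ≤ ∑ i, a i := by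
    calc m = ∑ _i : Fin m, 1 := by simp
      _ ≤ ∑ i, a i := Finset.sum_le_sum (fun i _ => ha i)
  constructor
  · intro hs0
    have hA2 : ∀ i ∈ (Finset.univ : Finset (Fin m)), ∀ j ∈ (Finset.univ : Finset (Fin m)),
        a i = 1 → a j = 1 → i = j := by
      intro i _ j _ hi _
      exfalso
      have h1 : i ∈ Finset.univ.filter fun i => a i = 1 := by simp [hi]
      have := Finset.card_pos.mpr ⟨i, h1⟩
      omega
    have hres := resolving_compl hm ha hk Finset.univ hA2
    have hcard := card_compl_image ha (Finset.univ : Finset (Fin m))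
    simp only [Finset.card_univ, Fintype.card_fin] at hcard
    unfold dimK
    have hmem : (∑ i, a i) - m ∈
        {t | ∃ S : Finset ((i : Fin m) × Fin (a i)),
          IsDistKResolving (completeMultipartiteGraph fun i => Fin (a i)) k ↑S ∧ S.card = t} :=
      ⟨_, hres, hcard⟩
    apply le_antisymm (Nat.sInf_le hmem)
    obtain ⟨S, hSr, hScard⟩ := Nat.sInf_mem (⟨_, hmem⟩ : Set.Nonempty _)
    have hlb := lower_bound hm ha hk S hSr
    rw [hs0] at hlb
    norm_num at hlb
    omega
  · intro hs0
    obtain ⟨i₀, hi₀⟩ := Finset.card_ne_zero.mp hs0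
    simp only [Finset.mem_filter] at hi₀
    set A := (Finset.univ.filter fun i => ¬ a i = 1) ∪ {i₀} with hA
    have hA2 : ∀ i ∈ A, ∀ j ∈ A, a i = 1 → a j = 1 → i = j := by
      intro i hi j hj h1 h2
      rw [hA, Finset.mem_union, Finset.mem_filter, Finset.mem_singleton] at hi hj
      rcases hi with hi | hi
      · exact absurd h1 hi.2
      rcases hj with hj | hj
      · exact absurd h2 hj.2
      rw [hi, hj]
    have hres := resolving_compl hm ha hk A hA2
    have hcard := card_compl_image ha A
    have hAcard : A.card = (m - (Finset.univ.filter fun i => a i = 1).card) + 1 := by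
      rw [hA, Finset.card_union_of_disjoint]
      · have := Finset.card_filter_add_card_filter_not
          (s := (Finset.univ : Finset (Fin m))) (p := fun i => a i = 1)
        simp only [Finset.card_univ, Fintype.card_fin] at this
        simp only [Finset.card_singleton]
        omega
      · simp [Finset.disjoint_singleton_right, hi₀.2]
    rw [hAcard] at hcard
    unfold dimK
    have hmem : (∑ i, a i) - ((m - (Finset.univ.filter fun i => a i = 1).card) + 1) ∈
        {t | ∃ S : Finset ((i : Fin m) × Fin (a i)),
          IsDistKResolving (completeMultipartiteGraph fun i => Fin (a i)) k ↑S ∧ S.card = t} :=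
      ⟨_, hres, hcard⟩
    apply le_antisymm
    · have := Nat.sInf_le hmem
      omega
    · obtain ⟨S, hSr, hScard⟩ := Nat.sInf_mem (⟨_, hmem⟩ : Set.Nonempty _)
      have hlb := lower_bound hm ha hk S hSr
      have hmin : min (Finset.univ.filter fun i => a i = 1).card 1 = 1 :=
        min_eq_right (by omega)
      rw [hmin] at hlb
      omega
end

section
/- Let $k$ be a positive integer, let $n \ge 2k+3$, and let $M_k$ be a minimum distance-$k$ resolving set of the cycle $C_n$. Then: (a) every gap of $M_k$ contains at most $2k+1$ vertices, and at most one gap of $M_k$ contains exactly $2k+1$ vertices; (b) if a gap of $M_k$ contains at least $k+1$ vertices, then each of its neighboring gaps contains at most $k$ vertices. -/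
/-!
A vertex of `Cₙ` at distance at most `k` from `x` has the form `x + t` with `|t| ≤ k`. Hence a
vertex lying at least `k + 1` steps inside a gap has truncated distance `k + 1` to every vertex
of `M`, and a resolving set leaves at most one vertex with that property. A gap with `2k + 2`
vertices contains two such vertices, and two gaps with `2k + 1` vertices contain one each (their
middle vertices). If two neighboring gaps both have at least `k + 1` vertices, the two cycle
neighbours of their common vertex `m ∈ M` are both at distance `1` from `m` and at truncated
distance `k + 1` from the rest of `M`.
-/

open SimpleGraph

/-- The cycle on the vertices `u₀, u₁, …, u_{n-1}` (identified with `ZMod n`),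
with `uᵢ` adjacent to `u_{i±1}` (indices mod `n`). -/
def cycleZMod (n : ℕ) : SimpleGraph (ZMod n) where
  Adj x y := x ≠ y ∧ (x - y = 1 ∨ y - x = 1)
  symm := by
    constructor
    rintro x y ⟨hxy, h⟩
    exact ⟨hxy.symm, h.symm⟩
  loopless := by
    constructor
    rintro x ⟨hx, _⟩
    exact hx rfl

/-- `IsGap M i l` : the vertices `i` and `i + (l+1)` are neighboring vertices of `M`
on the cycle and the `l` vertices `i+1, …, i+l` strictly between them form the
corresponding gap of `M`. -/
def IsGap {n : ℕ} (M : Set (ZMod n)) (i : ZMod n) (l : ℕ) : Prop :=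
  l + 1 < n ∧ i ∈ M ∧ i + ((l : ℕ) + 1 : ℕ) ∈ M ∧
    ∀ t : ℕ, 1 ≤ t → t ≤ l → i + (t : ZMod n) ∉ M

lemma distK_eq_one_of_adj {V : Type*} {G : SimpleGraph V} (k : ℕ) {x y : V} (h : G.Adj x y) :
    distK G k x y = 1 := by
  rw [distK, edist_eq_one_iff_adj.mpr h]
  exact min_eq_left (by simp)

lemma IsDistKResolving.eq_of_forall_distK_eq {V : Type*} {G : SimpleGraph V} {k : ℕ} {S : Set V}
    (hS : IsDistKResolving G k S) {x y : V} (h : ∀ z ∈ S, distK G k x z = distK G k y z) :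
    x = y := by
  by_contra hxy
  obtain ⟨z, hz, hne⟩ := hS x y hxy
  exact hne (h z hz)

namespace cycleZMod

variable {n : ℕ}

lemma exists_eq_add_of_adj {x y : ZMod n} (h : (cycleZMod n).Adj x y) :
    ∃ e : ℤ, |e| = 1 ∧ y = x + e := by
  obtain ⟨-, h | h⟩ := h
  · exact ⟨-1, by norm_num, by push_cast; linear_combination -h⟩
  · exact ⟨1, by norm_num, by push_cast; linear_combination h⟩

lemma exists_eq_add_of_walk {x y : ZMod n} (p : (cycleZMod n).Walk x y) :
    ∃ t : ℤ, |t| ≤ p.length ∧ y = x + t := by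
  induction p with
  | nil => exact ⟨0, by simp, by simp⟩
  | cons h p ih =>
    obtain ⟨e, he, rfl⟩ := exists_eq_add_of_adj h
    obtain ⟨t, ht, rfl⟩ := ih
    refine ⟨e + t, ?_, by push_cast; ring⟩
    rw [Walk.length_cons]
    push_cast
    linarith [abs_add_le e t]

lemma distK_eq_of_forall_ne (k : ℕ) {x y : ZMod n} (h : ∀ t : ℤ, |t| ≤ k → y ≠ x + t) :
    distK (cycleZMod n) k x y = k + 1 := by
  refine min_eq_right (not_lt.mp fun hlt => ?_)
  obtain ⟨p, hp⟩ := exists_walk_of_edist_ne_top (ne_top_of_lt hlt)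
  obtain ⟨t, ht, hy⟩ := exists_eq_add_of_walk p
  rw [← hp] at hlt
  have hlen : p.length ≤ k := by exact_mod_cast Order.le_of_lt_add_one hlt
  exact h t (ht.trans (by exact_mod_cast hlen)) hy

end cycleZMod

lemma ZMod.natCast_ne_zero_of_pos_of_lt {n a : ℕ} (h0 : 0 < a) (ha : a < n) :
    (a : ZMod n) ≠ 0 := by
  rw [Ne, ZMod.natCast_eq_zero_iff]
  exact fun h => absurd (Nat.le_of_dvd h0 h) (by omega)

section Gaps

variable {n : ℕ} {S : Set (ZMod n)} {i : ZMod n} {l k : ℕ}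

lemma IsGap.add_notMem (hG : IsGap S i l) {s : ℤ} (h1 : 1 ≤ s) (hs : s ≤ l) :
    i + (s : ZMod n) ∉ S := by
  lift s to ℕ using (by omega)
  exact_mod_cast hG.2.2.2 s (by omega) (by omega)

lemma IsGap.distK_eq (hG : IsGap S i l) {a : ℤ} (ha : k + 1 ≤ a) (hal : a + k ≤ l)
    {z : ZMod n} (hz : z ∈ S) : distK (cycleZMod n) k (i + a) z = k + 1 := by
  refine cycleZMod.distK_eq_of_forall_ne k fun t ht hzt => ?_
  have hz' : z = i + ((a + t : ℤ) : ZMod n) := by rw [hzt]; push_cast; ring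
  have := abs_le.mp ht
  exact hG.add_notMem (s := a + t) (by omega) (by omega) (hz' ▸ hz)

lemma IsGap.distK_eq_of_next (hG : IsGap S i l) {l' : ℕ}
    (hG' : IsGap S (i + ((l + 1 : ℕ) : ZMod n)) l') (hl : k + 1 ≤ l) (hl' : k + 1 ≤ l')
    {e : ℤ} (he : |e| ≤ 1) {z : ZMod n} (hz : z ∈ S) (hzm : z ≠ i + ((l + 1 : ℕ) : ZMod n)) :
    distK (cycleZMod n) k (i + ((l + 1 : ℕ) : ZMod n) + e) z = k + 1 := by
  refine cycleZMod.distK_eq_of_forall_ne k fun t ht hzt => ?_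
  have he' := abs_le.mp he
  have ht' := abs_le.mp ht
  rcases lt_trichotomy (e + t) 0 with hs | hs | hs
  · have hz' : z = i + ((l + 1 + (e + t) : ℤ) : ZMod n) := by rw [hzt]; push_cast; ring
    exact hG.add_notMem (s := l + 1 + (e + t)) (by omega) (by omega) (hz' ▸ hz)
  · exact hzm (by rw [hzt, add_assoc, ← Int.cast_add, hs, Int.cast_zero, add_zero])
  · have hz' : z = i + ((l + 1 : ℕ) : ZMod n) + ((e + t : ℤ) : ZMod n) := by
      rw [hzt]; push_cast; ring
    exact hG'.add_notMem (s := e + t) (by omega) (by omega) (hz' ▸ hz)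

lemma IsDistKResolving.gap_length_le (hS : IsDistKResolving (cycleZMod n) k S)
    (hG : IsGap S i l) : l ≤ 2 * k + 1 := by
  by_contra! hl
  have hxy : i + ((k + 1 : ℤ) : ZMod n) = i + ((k + 2 : ℤ) : ZMod n) :=
    hS.eq_of_forall_distK_eq fun z hz => by
      rw [hG.distK_eq (by omega) (by omega) hz, hG.distK_eq (by omega) (by omega) hz]
  have hn := hG.1
  have h1 : ((1 : ℕ) : ZMod n) ≠ 0 := ZMod.natCast_ne_zero_of_pos_of_lt one_pos (by omega)
  exact h1 (by push_cast at hxy ⊢; linear_combination -hxy)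

lemma IsDistKResolving.eq_of_long_gaps (hS : IsDistKResolving (cycleZMod n) k S)
    (hG : IsGap S i l) {i' : ZMod n} {l' : ℕ} (hG' : IsGap S i' l')
    (hl : 2 * k + 1 ≤ l) (hl' : 2 * k + 1 ≤ l') : i = i' := by
  have hxy : i + ((k + 1 : ℤ) : ZMod n) = i' + ((k + 1 : ℤ) : ZMod n) :=
    hS.eq_of_forall_distK_eq fun z hz => by
      rw [hG.distK_eq (by omega) (by omega) hz, hG'.distK_eq (by omega) (by omega) hz]
  exact add_right_cancel hxy

lemma IsDistKResolving.not_long_neighboring_gaps (hS : IsDistKResolving (cycleZMod n) k S)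
    (hG : IsGap S i l) {l' : ℕ} (hG' : IsGap S (i + ((l + 1 : ℕ) : ZMod n)) l')
    (hl : k + 1 ≤ l) (hl' : k + 1 ≤ l') : False := by
  set m := i + ((l + 1 : ℕ) : ZMod n)
  have hn := hG.1
  have h1 : ((1 : ℕ) : ZMod n) ≠ 0 := ZMod.natCast_ne_zero_of_pos_of_lt one_pos (by omega)
  have h2 : ((2 : ℕ) : ZMod n) ≠ 0 := ZMod.natCast_ne_zero_of_pos_of_lt two_pos (by omega)
  push_cast at h1 h2
  have hadj_pred : (cycleZMod n).Adj (m + ((-1 : ℤ) : ZMod n)) m :=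
    ⟨by simpa using h1, Or.inr (by push_cast; ring)⟩
  have hadj_succ : (cycleZMod n).Adj (m + ((1 : ℤ) : ZMod n)) m :=
    ⟨by simpa using h1, Or.inl (by push_cast; ring)⟩
  have hxy : m + ((-1 : ℤ) : ZMod n) = m + ((1 : ℤ) : ZMod n) :=
    hS.eq_of_forall_distK_eq fun z hz => by
      by_cases hzm : z = m
      · rw [hzm, distK_eq_one_of_adj k hadj_pred, distK_eq_one_of_adj k hadj_succ]
      · rw [hG.distK_eq_of_next hG' hl hl' (by norm_num) hz hzm,
          hG.distK_eq_of_next hG' hl hl' (by norm_num) hz hzm]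
  exact h2 (by push_cast at hxy; linear_combination -hxy)

end Gaps

theorem stmt12_general (k n : ℕ)
    (M : Finset (ZMod n))
    (hres : IsDistKResolving (cycleZMod n) k ↑M) :
    (∀ (i : ZMod n) (l : ℕ), IsGap (↑M) i l → l ≤ 2 * k + 1) ∧
    (∀ (i i' : ZMod n) (l l' : ℕ), IsGap (↑M) i l → IsGap (↑M) i' l' →
      l = 2 * k + 1 → l' = 2 * k + 1 → i = i') ∧
    (∀ (i : ZMod n) (l : ℕ), IsGap (↑M) i l → k + 1 ≤ l →
      ∀ (j : ZMod n) (l' : ℕ), IsGap (↑M) j l' →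
        (j = i + ((l : ℕ) + 1 : ℕ) ∨ i = j + ((l' : ℕ) + 1 : ℕ)) → l' ≤ k) := by
  refine ⟨fun i l hG => hres.gap_length_le hG,
    fun i i' l l' hG hG' hl hl' => hres.eq_of_long_gaps hG hG' hl.ge hl'.ge, ?_⟩
  intro i l hG hl j l' hG' hij
  by_contra! hl'
  rcases hij with rfl | rfl
  · exact hres.not_long_neighboring_gaps hG hG' hl hl'
  · exact hres.not_long_neighboring_gaps hG' hG hl' hl

/-- For a minimum distance-`k` resolving set `M` of `Cₙ` (`n ≥ 2k+3`):
(a) every gap of `M` has at most `2k+1` vertices, and at most one gap has exactly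
`2k+1` vertices; (b) a gap with at least `k+1` vertices has all neighboring gaps
of at most `k` vertices. -/
theorem stmt12 (k n : ℕ) [NeZero n] (hk : 1 ≤ k) (hn : 2 * k + 3 ≤ n)
    (M : Finset (ZMod n))
    (hres : IsDistKResolving (cycleZMod n) k ↑M)
    (hmin : ∀ M' : Finset (ZMod n),
      IsDistKResolving (cycleZMod n) k ↑M' → M.card ≤ M'.card) :
    (∀ (i : ZMod n) (l : ℕ), IsGap (↑M) i l → l ≤ 2 * k + 1) ∧
    (∀ (i i' : ZMod n) (l l' : ℕ), IsGap (↑M) i l → IsGap (↑M) i' l' →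
      l = 2 * k + 1 → l' = 2 * k + 1 → i = i') ∧
    (∀ (i : ZMod n) (l : ℕ), IsGap (↑M) i l → k + 1 ≤ l →
      ∀ (j : ZMod n) (l' : ℕ), IsGap (↑M) j l' →
        (j = i + ((l : ℕ) + 1 : ℕ) ∨ i = j + ((l' : ℕ) + 1 : ℕ)) → l' ≤ k) :=
  stmt12_general k n M hres
end
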